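/- arXiv:2203.03202 — 7 statements merged into one kernel-verified Lean document; each statement's English description precedes it below -/
import Mathlib

section
/- Let K be a field, G a finite group, and V a finite-dimensional K-vector space with a representation ρ : G → GL(V) such that V is a simple K[G]-module. Let Q : V → K be a nonzero G-invariant quadratic form. Then either the polarization B of Q is nondegenerate, or char K = 2 and ρ is the trivial representation (ρ(g) = id_V for all g ∈ G), with Q injective and additive. -/
/-!
The radical of the polar form of a `G`-invariant quadratic form is a `G`-invariant subspace,
so by simplicity it is `0` (and the polar form is nondegenerate) or everything. In the latter
case `Q` is additive, `2 Q(x) = polar Q x x = 0` forces `char K = 2`, and the zero set of `Q`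
is then a `G`-invariant proper subspace, hence `0`; an additive map with trivial kernel is
injective, and injectivity turns `Q (ρ g x) = Q x` into `ρ g x = x`.
-/

open QuadraticMap

namespace QuadraticMap

section CommRing

variable {R M N : Type*} [CommRing R] [AddCommGroup M] [Module R M] [AddCommGroup N] [Module R N]
  (Q : QuadraticMap R M N)

theorem map_mem_ker_polarBilin {f : M →ₗ[R] M} (hf : Function.Surjective f)
    (hQf : ∀ x, Q (f x) = Q x) {x : M} (hx : x ∈ LinearMap.ker Q.polarBilin) :
    f x ∈ LinearMap.ker Q.polarBilin := by
  rw [LinearMap.mem_ker] at hx ⊢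
  ext y
  obtain ⟨y, rfl⟩ := hf y
  have hpolar : polar Q (f x) (f y) = polar Q x y := by
    simp only [polar, ← map_add, hQf]
  simpa [hpolar] using LinearMap.congr_fun hx y

theorem polar_eq_zero_of_ker_polarBilin_eq_top (h : LinearMap.ker Q.polarBilin = ⊤) (x y : M) :
    polar Q x y = 0 := by
  have hx : x ∈ LinearMap.ker Q.polarBilin := h ▸ Submodule.mem_top
  simpa using LinearMap.congr_fun hx y

theorem map_add_of_polar_eq_zero (h : ∀ x y, polar Q x y = 0) (x y : M) :
    Q (x + y) = Q x + Q y := by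
  simpa [polar, sub_sub, sub_eq_zero] using h x y

def zeroSubmoduleOfMapAdd (hadd : ∀ x y, Q (x + y) = Q x + Q y) : Submodule R M where
  carrier := {x | Q x = 0}
  add_mem' {x y} hx hy := by simp_all
  zero_mem' := Q.map_zero
  smul_mem' c x (hx : Q x = 0) := by
    change Q (c • x) = 0
    rw [QuadraticMap.map_smul, hx, smul_zero]

theorem injective_of_zeroSubmoduleOfMapAdd_eq_bot (hadd : ∀ x y, Q (x + y) = Q x + Q y)
    (h : Q.zeroSubmoduleOfMapAdd hadd = ⊥) : Function.Injective Q :=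
  (injective_iff_map_eq_zero (AddMonoidHom.mk' Q hadd)).mpr fun x hx ↦ by
    have hx : x ∈ Q.zeroSubmoduleOfMapAdd hadd := hx
    simpa [h] using hx

end CommRing

theorem two_eq_zero_of_polar_eq_zero {K V : Type*} [Field K] [AddCommGroup V] [Module K V]
    {Q : QuadraticForm K V} (hQ : Q ≠ 0) (h : ∀ x y, polar Q x y = 0) : (2 : K) = 0 := by
  obtain ⟨v, hv⟩ : ∃ v, Q v ≠ 0 := by
    by_contra! hzero
    exact hQ (QuadraticMap.ext hzero)
  have hvv := h v v
  rw [polar_self, nsmul_eq_mul, Nat.cast_ofNat] at hvv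
  exact (mul_eq_zero.mp hvv).resolve_right hv

end QuadraticMap

theorem statement0_general {K G V : Type*} [Field K] [Group G]
    [AddCommGroup V] [Module K V]
    (ρ : Representation K G V)
    (hsimple : ∀ U : Submodule K V, (∀ g : G, ∀ x ∈ U, ρ g x ∈ U) → U = ⊥ ∨ U = ⊤)
    (Q : QuadraticForm K V) (hQ : Q ≠ 0)
    (hinv : ∀ (g : G) (x : V), Q (ρ g x) = Q x) :
    (∀ x : V, (∀ y : V, polar (⇑Q) x y = 0) → x = 0) ∨
      (ringChar K = 2 ∧ (∀ g : G, ρ g = LinearMap.id) ∧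
        Function.Injective (⇑Q) ∧ ∀ x y : V, Q (x + y) = Q x + Q y) := by
  have hsurj (g : G) : Function.Surjective (ρ g) := fun y ↦ ⟨ρ g⁻¹ y, by simp⟩
  rcases hsimple _ fun g x ↦ Q.map_mem_ker_polarBilin (hsurj g) (hinv g) with hrad | hrad
  · refine Or.inl fun x hx ↦ ?_
    rw [← Submodule.mem_bot K, ← hrad, LinearMap.mem_ker]
    ext y
    exact hx y
  have hpolar := Q.polar_eq_zero_of_ker_polarBilin_eq_top hrad
  have hadd := Q.map_add_of_polar_eq_zero hpolar
  have hchar : ringChar K = 2 := CharP.ringChar_of_prime_eq_zero Nat.prime_two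
    (by exact_mod_cast two_eq_zero_of_polar_eq_zero hQ hpolar)
  have hzero : Q.zeroSubmoduleOfMapAdd hadd = ⊥ := by
    refine (hsimple _ fun g x hx ↦ (hinv g x).trans hx).resolve_right fun htop ↦ hQ ?_
    ext x
    exact (show x ∈ Q.zeroSubmoduleOfMapAdd hadd from htop ▸ trivial)
  have hinj := Q.injective_of_zeroSubmoduleOfMapAdd_eq_bot hadd hzero
  exact Or.inr ⟨hchar, fun g ↦ LinearMap.ext fun x ↦ hinj (hinv g x), hinj, hadd⟩

/-- Let `K` be a field, `G` a finite group and `V` a finite-dimensional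
`K`-vector space carrying a representation `ρ : G → GL(V)` such that `V` is a simple
`K[G]`-module (i.e. `V ≠ 0` and the only `ρ(G)`-invariant subspaces are `⊥` and `⊤`).
If `Q : V → K` is a nonzero `G`-invariant quadratic form, then either the polarization
of `Q` is nondegenerate, or `char K = 2`, `ρ` is the trivial representation, and `Q` is
injective and additive. -/
theorem statement0 {K G V : Type*} [Field K] [Group G] [Finite G]
    [AddCommGroup V] [Module K V] [FiniteDimensional K V]
    (ρ : Representation K G V)
    (hnt : Nontrivial V)
    (hsimple : ∀ U : Submodule K V, (∀ g : G, ∀ x ∈ U, ρ g x ∈ U) → U = ⊥ ∨ U = ⊤)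
    (Q : QuadraticForm K V) (hQ : Q ≠ 0)
    (hinv : ∀ (g : G) (x : V), Q (ρ g x) = Q x) :
    (∀ x : V, (∀ y : V, polar (⇑Q) x y = 0) → x = 0) ∨
      (ringChar K = 2 ∧ (∀ g : G, ρ g = LinearMap.id) ∧
        Function.Injective (⇑Q) ∧ ∀ x y : V, Q (x + y) = Q x + Q y) :=
  statement0_general ρ hsimple Q hQ hinv
end

section
/- Let L be a field with char L ≠ 2 and G a finite group. Let V = V₁ ⊕ V₂ be a direct sum of two G-subrepresentations, where dim_L V₁ is odd, and let Q₁ on V₁ and Q₂ on V₂ be nondegenerate G-invariant quadratic forms. Then for every c ∈ L^× there exists a nondegenerate G-invariant quadratic form Q on V whose determinant det(B(e_i,e_j)) (B the polarization of Q, (e_i) any basis of V) lies in the square class c·(L^×)². In particular, the nondegenerate G-invariant quadratic forms on V realize every square class of L as determinant. -/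
/-!
Scaling `Q₁` by `a ≠ 0` multiplies the Gram determinant of the orthogonal sum `a • Q₁ ⊥ Q₂` by
`a ^ dim V₁`, which is `a` times a square because `dim V₁` is odd. Hence `a = c / (det Q₁ · det Q₂)`
puts the determinant in `c · (Lˣ)²`; being nonzero, it also gives nondegeneracy, and a change of
basis only multiplies it by a nonzero square.
-/

open QuadraticMap LinearMap.BilinForm

namespace LinearMap.BilinForm

variable {R M M' : Type*} [CommRing R] [AddCommGroup M] [Module R M]
  [AddCommGroup M'] [Module R M']
  {ι κ : Type*} [Fintype ι] [DecidableEq ι] [Fintype κ] [DecidableEq κ]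

theorem toMatrix_basis_map (B : LinearMap.BilinForm R M) (b : Module.Basis ι R M)
    (f : M ≃ₗ[R] M') :
    toMatrix (b.map f) (B.compl₁₂ f.symm.toLinearMap f.symm.toLinearMap) = toMatrix b B := by
  ext i j
  simp [toMatrix_apply]

theorem exists_det_toMatrix_eq_mul_sq {K : Type*} [Field K] [Module K M]
    (B : LinearMap.BilinForm K M) (b : Module.Basis ι K M) (e : Module.Basis κ K M) :
    ∃ t : K, t ≠ 0 ∧ (toMatrix e B).det = (toMatrix b B).det * t ^ 2 := by
  let b' := b.reindex (b.indexEquiv e)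
  have hb' : (toMatrix b' B).det = (toMatrix b B).det := by
    have : toMatrix b' B =
        (toMatrix b B).submatrix (b.indexEquiv e).symm (b.indexEquiv e).symm := by
      ext i j
      simp [b', toMatrix_apply]
    rw [this, Matrix.det_submatrix_equiv_self]
  let _ : Invertible (b'.toMatrix e) := b'.invertibleToMatrix e
  refine ⟨(b'.toMatrix e).det, (Matrix.isUnit_det_of_invertible _).ne_zero, ?_⟩
  rw [← toMatrix_mul_basis_toMatrix b' e, Matrix.det_mul, Matrix.det_mul, Matrix.det_transpose,
    hb']
  ring

end LinearMap.BilinForm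

namespace Submodule

variable {R M : Type*} [Ring R] [AddCommGroup M] [Module R M] {V₁ V₂ : Submodule R M}

theorem prodEquivOfIsCompl_symm_apply_of_mapsTo (h : IsCompl V₁ V₂) (T : M →ₗ[R] M)
    (h₁ : ∀ x ∈ V₁, T x ∈ V₁) (h₂ : ∀ x ∈ V₂, T x ∈ V₂) (x : M) :
    (V₁.prodEquivOfIsCompl V₂ h).symm (T x) =
      (T.restrict h₁ ((V₁.prodEquivOfIsCompl V₂ h).symm x).1,
        T.restrict h₂ ((V₁.prodEquivOfIsCompl V₂ h).symm x).2) := by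
  rw [LinearEquiv.symm_apply_eq, coe_prodEquivOfIsCompl', LinearMap.coe_restrict_apply,
    LinearMap.coe_restrict_apply, ← map_add, ← coe_prodEquivOfIsCompl' _ _ h,
    LinearEquiv.apply_symm_apply]

end Submodule

namespace QuadraticMap

variable {R M M₁ M₂ : Type*} [CommRing R] [AddCommGroup M] [Module R M]
  [AddCommGroup M₁] [Module R M₁] [AddCommGroup M₂] [Module R M₂]
  {ι κ : Type*} [Fintype ι] [DecidableEq ι] [Fintype κ] [DecidableEq κ]

theorem toMatrix_polarBilin (Q : QuadraticForm R M) (b : Module.Basis ι R M) :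
    toMatrix b Q.polarBilin = Matrix.of fun i j => polar Q (b i) (b j) := by
  ext i j
  simp [toMatrix_apply]

theorem toMatrix_polarBilin_smul (a : R) (Q : QuadraticForm R M) (b : Module.Basis ι R M) :
    toMatrix b (a • Q).polarBilin = a • toMatrix b Q.polarBilin := by
  ext i j
  simp [toMatrix_apply, polar_smul]

theorem toMatrix_polarBilin_prod (Q₁ : QuadraticForm R M₁) (Q₂ : QuadraticForm R M₂)
    (b₁ : Module.Basis ι R M₁) (b₂ : Module.Basis κ R M₂) :
    toMatrix (b₁.prod b₂) (Q₁.prod Q₂).polarBilin =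
      Matrix.fromBlocks (toMatrix b₁ Q₁.polarBilin) 0 0 (toMatrix b₂ Q₂.polarBilin) := by
  ext (i | i) (j | j) <;> simp [toMatrix_apply]

variable {V₁ V₂ : Submodule R M}

noncomputable def orthogonalSum (h : IsCompl V₁ V₂) (Q₁ : QuadraticForm R V₁)
    (Q₂ : QuadraticForm R V₂) : QuadraticForm R M :=
  (Q₁.prod Q₂).comp (V₁.prodEquivOfIsCompl V₂ h).symm.toLinearMap

theorem det_toMatrix_polarBilin_orthogonalSum (h : IsCompl V₁ V₂) (Q₁ : QuadraticForm R V₁)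
    (Q₂ : QuadraticForm R V₂) (b₁ : Module.Basis ι R V₁) (b₂ : Module.Basis κ R V₂) :
    (toMatrix ((b₁.prod b₂).map (V₁.prodEquivOfIsCompl V₂ h))
        (orthogonalSum h Q₁ Q₂).polarBilin).det =
      (toMatrix b₁ Q₁.polarBilin).det * (toMatrix b₂ Q₂.polarBilin).det := by
  rw [orthogonalSum, polarBilin_comp, toMatrix_basis_map, toMatrix_polarBilin_prod,
    Matrix.det_fromBlocks_zero₂₁]

theorem orthogonalSum_apply_of_mapsTo (h : IsCompl V₁ V₂) {Q₁ : QuadraticForm R V₁}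
    {Q₂ : QuadraticForm R V₂} (T : M →ₗ[R] M) (h₁ : ∀ x ∈ V₁, T x ∈ V₁) (h₂ : ∀ x ∈ V₂, T x ∈ V₂)
    (hQ₁ : ∀ x, Q₁ (T.restrict h₁ x) = Q₁ x) (hQ₂ : ∀ x, Q₂ (T.restrict h₂ x) = Q₂ x) (x : M) :
    orthogonalSum h Q₁ Q₂ (T x) = orthogonalSum h Q₁ Q₂ x := by
  simp only [orthogonalSum, comp_apply, LinearEquiv.coe_coe,
    Submodule.prodEquivOfIsCompl_symm_apply_of_mapsTo h T h₁ h₂, prod_apply, hQ₁, hQ₂]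

end QuadraticMap

theorem statement4_general {L G V : Type*} [Field L] [Group G]
    [AddCommGroup V] [Module L V] [FiniteDimensional L V]
    (ρ : Representation L G V)
    (V₁ V₂ : Submodule L V)
    (hcompl : IsCompl V₁ V₂)
    (h₁ : ∀ g : G, ∀ x ∈ V₁, ρ g x ∈ V₁) (h₂ : ∀ g : G, ∀ x ∈ V₂, ρ g x ∈ V₂)
    (hodd : Odd (Module.finrank L V₁))
    (Q₁ : QuadraticForm L V₁) (Q₂ : QuadraticForm L V₂)
    (hQ₁nd : ∀ x : V₁, (∀ y : V₁, polar (⇑Q₁) x y = 0) → x = 0)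
    (hQ₂nd : ∀ x : V₂, (∀ y : V₂, polar (⇑Q₂) x y = 0) → x = 0)
    (hQ₁inv : ∀ (g : G) (x : V₁), Q₁ ((ρ g).restrict (h₁ g) x) = Q₁ x)
    (hQ₂inv : ∀ (g : G) (x : V₂), Q₂ ((ρ g).restrict (h₂ g) x) = Q₂ x) :
    ∀ c : L, c ≠ 0 → ∃ Q : QuadraticForm L V,
      (∀ x : V, (∀ y : V, polar (⇑Q) x y = 0) → x = 0) ∧
      (∀ (g : G) (x : V), Q (ρ g x) = Q x) ∧
      ∀ (n : ℕ) (e : Module.Basis (Fin n) L V),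
        ∃ u : L, u ≠ 0 ∧ (Matrix.of fun i j => polar (⇑Q) (e i) (e j)).det = c * u ^ 2 := by
  intro c hc
  let b₁ := Module.finBasis L V₁
  let b₂ := Module.finBasis L V₂
  have hd₁ : (toMatrix b₁ Q₁.polarBilin).det ≠ 0 :=
    (LinearMap.separatingLeft_iff_det_ne_zero b₁).mp fun x hx => hQ₁nd x hx
  have hd₂ : (toMatrix b₂ Q₂.polarBilin).det ≠ 0 :=
    (LinearMap.separatingLeft_iff_det_ne_zero b₂).mp fun x hx => hQ₂nd x hx
  set a := c / ((toMatrix b₁ Q₁.polarBilin).det * (toMatrix b₂ Q₂.polarBilin).det)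
  have ha : a ≠ 0 := div_ne_zero hc (mul_ne_zero hd₁ hd₂)
  obtain ⟨k, hk⟩ := hodd
  let Q := orthogonalSum hcompl (a • Q₁) Q₂
  let b := (b₁.prod b₂).map (V₁.prodEquivOfIsCompl V₂ hcompl)
  have hdet : (toMatrix b Q.polarBilin).det = c * (a ^ k) ^ 2 := by
    have hpow : a ^ Module.finrank L V₁ = a * (a ^ k) ^ 2 := by rw [hk]; ring
    have hscale : a * ((toMatrix b₁ Q₁.polarBilin).det * (toMatrix b₂ Q₂.polarBilin).det) = c :=
      div_mul_cancel₀ c (mul_ne_zero hd₁ hd₂)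
    rw [det_toMatrix_polarBilin_orthogonalSum, toMatrix_polarBilin_smul, Matrix.det_smul,
      Fintype.card_fin, hpow]
    linear_combination (a ^ k) ^ 2 * hscale
  have hdet_ne : (toMatrix b Q.polarBilin).det ≠ 0 := by
    rw [hdet]
    exact mul_ne_zero hc (pow_ne_zero _ (pow_ne_zero _ ha))
  refine ⟨Q, fun x hx => LinearMap.separatingLeft_of_det_ne_zero b hdet_ne x hx,
    fun g => orthogonalSum_apply_of_mapsTo hcompl (ρ g) (h₁ g) (h₂ g)
      (fun x => by simp [hQ₁inv]) (hQ₂inv g), fun n e => ?_⟩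
  obtain ⟨t, ht, hte⟩ := exists_det_toMatrix_eq_mul_sq Q.polarBilin b e
  refine ⟨a ^ k * t, mul_ne_zero (pow_ne_zero _ ha) ht, ?_⟩
  rw [← toMatrix_polarBilin, hte, hdet]
  ring

/-- Let `L` be a field with `char L ≠ 2`, `G` a finite group, and
`V = V₁ ⊕ V₂` a direct sum of two `G`-subrepresentations with `dim V₁` odd, each carrying
a nondegenerate `G`-invariant quadratic form.  Then every square class `c·(L^×)²` is
realized as the determinant of a nondegenerate `G`-invariant quadratic form on `V`. -/
theorem statement4 {L G V : Type*} [Field L] [Group G] [Finite G]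
    [AddCommGroup V] [Module L V] [FiniteDimensional L V]
    (hchar : ringChar L ≠ 2)
    (ρ : Representation L G V)
    (V₁ V₂ : Submodule L V)
    (hcompl : IsCompl V₁ V₂)
    (h₁ : ∀ g : G, ∀ x ∈ V₁, ρ g x ∈ V₁) (h₂ : ∀ g : G, ∀ x ∈ V₂, ρ g x ∈ V₂)
    (hodd : Odd (Module.finrank L V₁))
    (Q₁ : QuadraticForm L V₁) (Q₂ : QuadraticForm L V₂)
    (hQ₁nd : ∀ x : V₁, (∀ y : V₁, polar (⇑Q₁) x y = 0) → x = 0)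
    (hQ₂nd : ∀ x : V₂, (∀ y : V₂, polar (⇑Q₂) x y = 0) → x = 0)
    (hQ₁inv : ∀ (g : G) (x : V₁), Q₁ ((ρ g).restrict (h₁ g) x) = Q₁ x)
    (hQ₂inv : ∀ (g : G) (x : V₂), Q₂ ((ρ g).restrict (h₂ g) x) = Q₂ x) :
    ∀ c : L, c ≠ 0 → ∃ Q : QuadraticForm L V,
      (∀ x : V, (∀ y : V, polar (⇑Q) x y = 0) → x = 0) ∧
      (∀ (g : G) (x : V), Q (ρ g x) = Q x) ∧
      ∀ (n : ℕ) (e : Module.Basis (Fin n) L V),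
        ∃ u : L, u ≠ 0 ∧ (Matrix.of fun i j => polar (⇑Q) (e i) (e j)).det = c * u ^ 2 :=
  statement4_general ρ V₁ V₂ hcompl h₁ h₂ hodd Q₁ Q₂ hQ₁nd hQ₂nd hQ₁inv hQ₂inv
end

section
/- Let K be a field, G a finite group, and S a simple finite-dimensional K[G]-module that is not isomorphic to its dual S^∨ (with the contragredient action). Let V := S ⊕ S^∨ and let Q be a nondegenerate G-invariant quadratic form on V. Then Q vanishes identically on the submodule S ⊕ 0 (which is totally isotropic of half the dimension of V), and if char K ≠ 2 then det(B(e_i,e_j)) ≡ (−1)^{dim S} modulo (K^×)² for any basis (e_i) of V, B the polarization of Q; i.e. the discriminant disc(Q) is the trivial square class. -/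
/-!
A `G`-invariant bilinear form on `S` is the same as a `G`-map `S → S^∨`, so by Schur's lemma every
invariant bilinear form on `S` vanishes. Hence the restriction `q` of `Q` to `S ⊕ 0` has zero polar
form; `q` is then additive and its zero set is a `G`-stable subspace. That subspace is not `0`,
since `q (g s - s) = q (g s) - q s = 0` would force `G` to act trivially, making `S ≅ S^∨`; so `q = 0`.
In a basis adapted to `S ⊕ S^∨` the Gram matrix is `[[0, C], [Cᵀ, D]]`, of determinant
`(-1)^{dim S} (det C)^2`, and a change of basis multiplies the Gram determinant by a square.
-/

open QuadraticMap Matrix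

section Blocks

variable {R m : Type*} [CommRing R] [Fintype m] [DecidableEq m]

-- The shear makes the lower right block invertible, so that the Schur complement formula applies.
theorem det_fromBlocks_zero_one_one_zero :
    (fromBlocks 0 1 1 0 : Matrix (m ⊕ m) (m ⊕ m) R).det = (-1) ^ Fintype.card m := by
  have hshear : (fromBlocks 0 1 1 0 : Matrix (m ⊕ m) (m ⊕ m) R) * fromBlocks 1 1 0 1 =
      fromBlocks 0 1 1 1 := by
    simp [fromBlocks_multiply]
  have hdet := congrArg det hshear
  rw [det_mul, det_fromBlocks_zero₂₁, det_one, mul_one, mul_one] at hdet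
  rw [hdet, det_fromBlocks_one₂₂, mul_one, zero_sub, det_neg, det_one, mul_one]

theorem det_fromBlocks_zero₁₁ (A B D : Matrix m m R) :
    (fromBlocks 0 A B D).det = (-1) ^ Fintype.card m * A.det * B.det := by
  have hswap : fromBlocks 0 A B D = fromBlocks A 0 D B * fromBlocks 0 1 1 0 := by
    simp [fromBlocks_multiply]
  rw [hswap, det_mul, det_fromBlocks_zero₁₂, det_fromBlocks_zero_one_one_zero]
  ring

end Blocks

section GramDeterminant

variable {K V : Type*} [Field K] [AddCommGroup V] [Module K V]

theorem exists_det_toMatrix₂_eq_mul_sq {ι ι' : Type*} [Fintype ι] [DecidableEq ι]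
    [Fintype ι'] [DecidableEq ι'] (B : V →ₗ[K] V →ₗ[K] K) (b : Module.Basis ι K V)
    (e : Module.Basis ι' K V) :
    ∃ c : K, (LinearMap.toMatrix₂ e e B).det = (LinearMap.toMatrix₂ b b B).det * c ^ 2 := by
  let b' := b.reindex (b.indexEquiv e)
  have hreindex : LinearMap.toMatrix₂ b' b' B =
      (LinearMap.toMatrix₂ b b B).submatrix (b.indexEquiv e).symm (b.indexEquiv e).symm := by
    ext i j
    simp [b', LinearMap.toMatrix₂_apply]
  refine ⟨(b'.toMatrix e).det, ?_⟩
  rw [← LinearMap.toMatrix₂_mul_basis_toMatrix b' b' e e, det_mul, det_mul, det_transpose,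
    hreindex, det_submatrix_equiv_self]
  ring

theorem exists_det_toMatrix₂_prod_eq_neg_one_pow_mul_sq {M N ι : Type*}
    [AddCommGroup M] [Module K M] [FiniteDimensional K M]
    [AddCommGroup N] [Module K N] [FiniteDimensional K N]
    [Fintype ι] [DecidableEq ι]
    (hMN : Module.finrank K N = Module.finrank K M) (B : LinearMap.BilinForm K (M × N))
    (hB : B.IsSymm) (hiso : ∀ x y : M, B (x, 0) (y, 0) = 0) (e : Module.Basis ι K (M × N)) :
    ∃ u : K, (LinearMap.toMatrix₂ e e B).det = (-1) ^ Module.finrank K M * u ^ 2 := by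
  let bM := Module.finBasis K M
  let bN := (Module.finBasis K N).reindex (finCongr hMN)
  let C : Matrix (Fin (Module.finrank K M)) (Fin (Module.finrank K M)) K :=
    of fun i j => B (bM i, 0) (0, bN j)
  let D : Matrix (Fin (Module.finrank K M)) (Fin (Module.finrank K M)) K :=
    of fun i j => B (0, bN i) (0, bN j)
  have hblocks : LinearMap.toMatrix₂ (bM.prod bN) (bM.prod bN) B = fromBlocks 0 C Cᵀ D := by
    ext (i | i) (j | j)
    · simp [LinearMap.toMatrix₂_apply, hiso]
    · simp [LinearMap.toMatrix₂_apply, C]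
    · simp [LinearMap.toMatrix₂_apply, C, hB.eq (0, bN i)]
    · simp [LinearMap.toMatrix₂_apply, D]
  obtain ⟨c, hc⟩ := exists_det_toMatrix₂_eq_mul_sq B (bM.prod bN) e
  refine ⟨C.det * c, ?_⟩
  rw [hc, hblocks, det_fromBlocks_zero₁₁, det_transpose, Fintype.card_fin]
  ring

end GramDeterminant

def QuadraticMap.zeroSubmodule {R M : Type*} [CommRing R] [AddCommGroup M] [Module R M]
    (q : QuadraticForm R M) (hq : polarBilin q = 0) : Submodule R M where
  carrier := {x | q x = 0}
  add_mem' {x y} hx hy := by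
    have hxy : polar q x y = 0 := LinearMap.congr_fun₂ hq x y
    simp_all [polar]
  zero_mem' := q.map_zero
  smul_mem' c x hx := by simp_all [QuadraticMap.map_smul]

section Invariant

variable {K G S : Type*} [Field K] [Group G] [AddCommGroup S] [Module K S]
  [FiniteDimensional K S]

theorem bilinForm_eq_zero_of_invariant (ρ : Representation K G S)
    (hsimple : ∀ U : Submodule K S, (∀ g : G, ∀ x ∈ U, ρ g x ∈ U) → U = ⊥ ∨ U = ⊤)
    (hnotdual : ¬ ∃ e : S ≃ₗ[K] Module.Dual K S,
      ∀ (g : G) (x : S), e (ρ g x) = (ρ g⁻¹).dualMap (e x))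
    (B : LinearMap.BilinForm K S) (hB : ∀ (g : G) (x y : S), B (ρ g x) (ρ g y) = B x y) :
    B = 0 := by
  have hequiv : ∀ (g : G) (x : S), B (ρ g x) = (ρ g⁻¹).dualMap (B x) := by
    intro g x
    ext y
    rw [LinearMap.dualMap_apply, ← hB g x, ρ.self_inv_apply]
  rcases hsimple (LinearMap.ker B) (fun g x hx => by simp_all) with hker | hker
  · exact absurd ⟨B.linearEquivOfInjective (LinearMap.ker_eq_bot.mp hker)
      Subspace.dual_finrank_eq.symm, hequiv⟩ hnotdual
  · exact LinearMap.ker_eq_top.mp hker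

theorem quadraticForm_eq_zero_of_invariant (ρ : Representation K G S)
    (hsimple : ∀ U : Submodule K S, (∀ g : G, ∀ x ∈ U, ρ g x ∈ U) → U = ⊥ ∨ U = ⊤)
    (hnotdual : ¬ ∃ e : S ≃ₗ[K] Module.Dual K S,
      ∀ (g : G) (x : S), e (ρ g x) = (ρ g⁻¹).dualMap (e x))
    (q : QuadraticForm K S) (hq : ∀ (g : G) (x : S), q (ρ g x) = q x) :
    q = 0 := by
  have hpolar : polarBilin q = 0 :=
    bilinForm_eq_zero_of_invariant ρ hsimple hnotdual _ fun g x y => by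
      simp only [polarBilin_apply_apply, polar, ← map_add, hq]
  rcases hsimple (q.zeroSubmodule hpolar) (fun g x hx => (hq g x).trans hx) with hbot | htop
  · have htriv : ∀ (g : G) (x : S), ρ g x = x := by
      intro g x
      have hsub : q (ρ g x - x) = 0 := by
        have h := LinearMap.congr_fun₂ hpolar (ρ g x - x) x
        simp only [polarBilin_apply_apply, polar, sub_add_cancel, hq,
          LinearMap.zero_apply] at h
        linear_combination -h
      have : ρ g x - x ∈ q.zeroSubmodule hpolar := hsub
      rwa [hbot, Submodule.mem_bot, sub_eq_zero] at this
    refine (hnotdual ⟨LinearEquiv.ofFinrankEq S _ Subspace.dual_finrank_eq.symm,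
      fun g x => ?_⟩).elim
    ext y
    simp [htriv]
  · ext x
    exact (htop ▸ Submodule.mem_top : x ∈ q.zeroSubmodule hpolar)

end Invariant

theorem statement7_general {K G S : Type*} [Field K] [Group G]
    [AddCommGroup S] [Module K S] [FiniteDimensional K S]
    (ρ : Representation K G S)
    (hsimple : ∀ U : Submodule K S, (∀ g : G, ∀ x ∈ U, ρ g x ∈ U) → U = ⊥ ∨ U = ⊤)
    -- `S` is not isomorphic to its dual with the contragredient action:
    (hnotdual : ¬ ∃ e : S ≃ₗ[K] Module.Dual K S,
      ∀ (g : G) (x : S), e (ρ g x) = (ρ g⁻¹).dualMap (e x))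
    (Q : QuadraticForm K (S × Module.Dual K S))
    (hnd : ∀ x : S × Module.Dual K S,
      (∀ y : S × Module.Dual K S, polar (⇑Q) x y = 0) → x = 0)
    (hinv : ∀ (g : G) (x : S × Module.Dual K S),
      Q (LinearMap.prodMap (ρ g) ((ρ g⁻¹).dualMap) x) = Q x) :
    (∀ s : S, Q (s, 0) = 0) ∧
    (ringChar K ≠ 2 →
      ∀ (n : ℕ) (e : Module.Basis (Fin n) K (S × Module.Dual K S)),
        ∃ u : K, u ≠ 0 ∧
          (Matrix.of fun i j => polar (⇑Q) (e i) (e j)).det =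
            (-1 : K) ^ Module.finrank K S * u ^ 2) := by
  have hQS : Q.comp (LinearMap.inl K S (Module.Dual K S)) = 0 :=
    quadraticForm_eq_zero_of_invariant ρ hsimple hnotdual _ fun g s => by
      simpa using hinv g (s, 0)
  have hQ : ∀ s : S, Q (s, 0) = 0 := fun s => by simpa using congr($hQS s)
  refine ⟨hQ, fun _ n e => ?_⟩
  have hiso : ∀ s t : S, polarBilin Q (s, 0) (t, 0) = 0 := fun s t => by
    simp [polar, hQ]
  obtain ⟨u, hu⟩ := exists_det_toMatrix₂_prod_eq_neg_one_pow_mul_sq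
    Subspace.dual_finrank_eq (polarBilin Q) ⟨polar_comm Q⟩ hiso e
  have hgram : (Matrix.of fun i j => polar (⇑Q) (e i) (e j)) =
      LinearMap.toMatrix₂ e e (polarBilin Q) := by
    ext i j
    simp [LinearMap.toMatrix₂_apply]
  have hdet : (LinearMap.toMatrix₂ e e (polarBilin Q)).det ≠ 0 :=
    (LinearMap.separatingLeft_iff_det_ne_zero e).mp hnd
  exact ⟨u, fun hu0 => hdet (by simp [hu, hu0]), hgram ▸ hu⟩

/-- Let `K` be a field, `G` a finite group, `S` a simple finite-dimensional
`K[G]`-module not isomorphic to its dual `S^∨` (with the contragredient action), and `Q` a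
nondegenerate `G`-invariant quadratic form on `V := S ⊕ S^∨`.  Then `Q` vanishes on
`S ⊕ 0`, and if `char K ≠ 2` the Gram determinant of `Q` is `(-1)^{dim S}` modulo squares,
i.e. `disc Q` is the trivial square class. -/
theorem statement7 {K G S : Type*} [Field K] [Group G] [Finite G]
    [AddCommGroup S] [Module K S] [FiniteDimensional K S]
    (ρ : Representation K G S)
    (hnt : Nontrivial S)
    (hsimple : ∀ U : Submodule K S, (∀ g : G, ∀ x ∈ U, ρ g x ∈ U) → U = ⊥ ∨ U = ⊤)
    -- `S` is not isomorphic to its dual with the contragredient action: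
    (hnotdual : ¬ ∃ e : S ≃ₗ[K] Module.Dual K S,
      ∀ (g : G) (x : S), e (ρ g x) = (ρ g⁻¹).dualMap (e x))
    (Q : QuadraticForm K (S × Module.Dual K S))
    (hnd : ∀ x : S × Module.Dual K S,
      (∀ y : S × Module.Dual K S, polar (⇑Q) x y = 0) → x = 0)
    (hinv : ∀ (g : G) (x : S × Module.Dual K S),
      Q (LinearMap.prodMap (ρ g) ((ρ g⁻¹).dualMap) x) = Q x) :
    (∀ s : S, Q (s, 0) = 0) ∧
    (ringChar K ≠ 2 →
      ∀ (n : ℕ) (e : Module.Basis (Fin n) K (S × Module.Dual K S)),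
        ∃ u : K, u ≠ 0 ∧
          (Matrix.of fun i j => polar (⇑Q) (e i) (e j)).det =
            (-1 : K) ^ Module.finrank K S * u ^ 2) :=
  statement7_general ρ hsimple hnotdual Q hnd hinv
end

section
/- Let q be an odd prime power, d ≥ 1, and let T : 𝔽_{q^d} → 𝔽_q denote the field trace. Let (V, Q) be a nondegenerate quadratic space over 𝔽_{q^d} of even dimension n. Then T ∘ Q is a nondegenerate quadratic form on V regarded as an 𝔽_q-vector space (of dimension nd), and the discriminant disc(T ∘ Q) is the trivial square class in 𝔽_q^×/(𝔽_q^×)² if and only if disc(Q) is the trivial square class in 𝔽_{q^d}^×/(𝔽_{q^d}^×)². -/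
open QuadraticMap Module
open LinearMap (BilinForm toMatrix₂ toMatrix₂_apply)
open LinearMap.BilinForm

/-!
Let `B` be the polarization of `Q`, `f` a `K`-basis of `V`, `bK` an `F`-basis of `K`, and `B₀` the
form with identity Gram matrix in `f`, so that `B = B₀(·, φ ·)` with `φ` the `K`-linear map whose
matrix is the Gram matrix of `B`. In the basis `bK ⊗ f` the Gram matrix of `T ∘ B₀` is block
diagonal with `n` copies of the trace matrix of `bK`, and restricting the scalars of `φ` to `F`
replaces its determinant by the norm, so `det (T ∘ B) = disc(bK) ^ n * N (det B)`. For `n` even the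
first factor is a square and the signs agree, since `N (-1) = (-1) ^ [K : F]`. What remains is that
for `a ≠ 0`, `N a` is a square in `F` iff `a` is a square in `K`: by Euler's criterion, as
`N a = a ^ ((#K - 1) / (#F - 1))`.
-/

theorem isSquare_sq_mul_iff {G₀ : Type*} [CommGroupWithZero G₀] {u : G₀} (hu : u ≠ 0) (a : G₀) :
    IsSquare (u ^ 2 * a) ↔ IsSquare a := by
  refine ⟨fun h => ?_, (IsSquare.sq u).mul⟩
  simpa [← mul_assoc, ← mul_pow, hu] using (IsSquare.sq u⁻¹).mul h

theorem Even.neg_one_pow_mul_pred_div_two {R : Type*} [Monoid R] [HasDistribNeg R] {n : ℕ}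
    (hn : Even n) : (-1 : R) ^ (n * (n - 1) / 2) = (-1) ^ (n / 2) := by
  obtain ⟨t, rfl⟩ := hn
  rcases Nat.eq_zero_or_pos t with rfl | ht
  · simp
  have hodd : Odd (t + t - 1) := ⟨t - 1, by omega⟩
  rw [show (t + t) * (t + t - 1) / 2 = t * (t + t - 1) by
      rw [← two_mul, mul_assoc, Nat.mul_div_cancel_left _ two_pos],
    show (t + t) / 2 = t by omega, mul_comm, pow_mul, hodd.neg_one_pow]

namespace FiniteField

theorem isSquare_norm_iff {F K : Type*} [Field F] [Fintype F] [Field K] [Fintype K] [Algebra F K]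
    (hF : ringChar F ≠ 2) {a : K} (ha : a ≠ 0) :
    IsSquare (Algebra.norm F a) ↔ IsSquare a := by
  have hK : ringChar K ≠ 2 := Algebra.ringChar_eq F K ▸ hF
  have hF_odd := odd_card_of_char_ne_two hF
  have hK_odd := odd_card_of_char_ne_two hK
  have hF_pos : 0 < Fintype.card F - 1 := by have := Fintype.one_lt_card (α := F); omega
  have hexp : (Fintype.card K - 1) / (Fintype.card F - 1) * (Fintype.card F / 2) =
      Fintype.card K / 2 := by
    have hdvd : Fintype.card F - 1 ∣ Fintype.card K - 1 :=
      card_eq_pow_finrank (K := F) (V := K) ▸ Nat.sub_one_dvd_pow_sub_one _ _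
    rw [show Fintype.card F / 2 = (Fintype.card F - 1) / 2 by omega,
      show Fintype.card K / 2 = (Fintype.card K - 1) / 2 by omega,
      Nat.div_mul_div_comm hdvd ⟨Fintype.card F / 2, by omega⟩, mul_comm (Fintype.card F - 1) 2,
      Nat.mul_div_mul_right _ _ hF_pos]
  rw [isSquare_iff hF (Algebra.norm_ne_zero_iff.mpr ha), isSquare_iff hK ha,
    ← (algebraMap F K).injective.eq_iff, map_pow, algebraMap_norm_eq_pow, ← pow_mul, map_one,
    Nat.card_eq_fintype_card, Nat.card_eq_fintype_card, hexp]

end FiniteField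

namespace LinearMap.BilinForm

section SignedDiscr

variable {R M ι κ : Type*} [AddCommGroup M] [Fintype ι] [DecidableEq ι] [Fintype κ] [DecidableEq κ]

section CommRing

variable [CommRing R] [Module R M]

noncomputable def signedDiscr (B : BilinForm R M) (b : Basis ι R M) : R :=
  (-1) ^ (Fintype.card ι * (Fintype.card ι - 1) / 2) * (toMatrix₂ b b B).det

theorem signedDiscr_eq_of_fin {N : ℕ} (B : BilinForm R M) (b : Basis (Fin N) R M) :
    B.signedDiscr b = (-1) ^ (N * (N - 1) / 2) * (Matrix.of fun i j => B (b i) (b j)).det := by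
  rw [signedDiscr, Fintype.card_fin]
  congr 2
  ext
  rw [toMatrix₂_apply, Matrix.of_apply]

theorem det_toMatrix₂_reindex (B : BilinForm R M) (c : Basis κ R M) (σ : κ ≃ ι) :
    (toMatrix₂ (c.reindex σ) (c.reindex σ) B).det = (toMatrix₂ c c B).det := by
  rw [← Matrix.det_submatrix_equiv_self σ.symm]
  congr 1
  ext i j
  simp [toMatrix₂_apply]

end CommRing

variable [Field R] [Module R M]

theorem isSquare_mul_det_toMatrix₂_iff (B : BilinForm R M) (b : Basis ι R M) (c : Basis κ R M)
    (s : R) : IsSquare (s * (toMatrix₂ b b B).det) ↔ IsSquare (s * (toMatrix₂ c c B).det) := by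
  set c' := c.reindex (c.indexEquiv b)
  have := c'.invertibleToMatrix b
  have hu : (c'.toMatrix b).det ≠ 0 := (Matrix.isUnit_det_of_invertible _).ne_zero
  rw [← det_toMatrix₂_reindex B c (c.indexEquiv b), ← LinearMap.toMatrix₂_mul_basis_toMatrix c' c',
    Matrix.det_mul, Matrix.det_mul, Matrix.det_transpose,
    ← isSquare_sq_mul_iff hu (s * (toMatrix₂ c' c' B).det)]
  exact iff_of_eq (congrArg IsSquare (by ring))

theorem isSquare_signedDiscr_iff_of_basis (B : BilinForm R M) (b : Basis ι R M)
    (c : Basis κ R M) : IsSquare (B.signedDiscr b) ↔ IsSquare (B.signedDiscr c) := by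
  rw [signedDiscr, signedDiscr, Fintype.card_congr (c.indexEquiv b)]
  exact isSquare_mul_det_toMatrix₂_iff B b c _

end SignedDiscr

section TraceRestrict

variable (F : Type*) {K V : Type*} [Field F] [Field K] [Algebra F K] [AddCommGroup V] [Module K V]
  [Module F V] [IsScalarTower F K V]

noncomputable def traceRestrict (B : BilinForm K V) : BilinForm F V :=
  (B.restrictScalars₁₂ F F).compr₂ (Algebra.trace F K)

@[simp]
theorem traceRestrict_apply (B : BilinForm K V) (x y : V) :
    traceRestrict F B x y = Algebra.trace F K (B x y) := rfl

theorem SeparatingLeft.traceRestrict [FiniteDimensional F K] [Algebra.IsSeparable F K]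
    {B : BilinForm K V} (hB : B.SeparatingLeft) : (traceRestrict F B).SeparatingLeft := by
  intro x hx
  by_contra hx0
  obtain ⟨y, hy⟩ := not_forall.mp (mt (hB x) hx0)
  obtain ⟨z, hz⟩ := not_forall.mp (Algebra.trace_ne_zero F K ∘ LinearMap.ext)
  apply hz
  simpa [hy] using hx ((z * (B x y)⁻¹) • y)

variable {ι κ : Type*} [Fintype ι] [DecidableEq ι] [Fintype κ] [DecidableEq κ]

theorem toMatrix₂_traceRestrict_toLinearMap₂_one (bK : Basis κ F K) (f : Basis ι K V) :
    toMatrix₂ (bK.smulTower f) (bK.smulTower f)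
        (traceRestrict F (Matrix.toLinearMap₂ f f (1 : Matrix ι ι K))) =
      Matrix.blockDiagonal fun _ => Algebra.traceMatrix F bK := by
  ext ⟨k, i⟩ ⟨l, j⟩
  rw [toMatrix₂_apply, traceRestrict_apply, Basis.smulTower_apply, Basis.smulTower_apply,
    LinearMap.map_smul₂, LinearMap.map_smul, Matrix.toLinearMap₂_apply_basis,
    Matrix.blockDiagonal_apply, Algebra.traceMatrix_apply, Algebra.traceForm_apply, Matrix.one_apply]
  split_ifs <;> simp [mul_comm]

theorem det_toMatrix₂_traceRestrict (bK : Basis κ F K) (f : Basis ι K V)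
    (B : BilinForm K V) :
    (toMatrix₂ (bK.smulTower f) (bK.smulTower f) (traceRestrict F B)).det =
      Algebra.discr F bK ^ Fintype.card ι * Algebra.norm F (toMatrix₂ f f B).det := by
  set B₀ := Matrix.toLinearMap₂ f f (1 : Matrix ι ι K)
  set φ := Matrix.toLin f f (toMatrix₂ f f B)
  have hB : B = B₀.compl₂ φ := (toMatrix₂ f f).injective <| by
    rw [LinearMap.toMatrix₂_compl₂ f f f, LinearMap.toMatrix₂_toLinearMap₂, LinearMap.toMatrix_toLin,
      one_mul]
  have hBF : traceRestrict F B = (traceRestrict F B₀).compl₂ (φ.restrictScalars F) := by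
    rw [hB]; rfl
  rw [hBF, LinearMap.toMatrix₂_compl₂ _ (bK.smulTower f), Matrix.det_mul,
    toMatrix₂_traceRestrict_toLinearMap₂_one, Matrix.det_blockDiagonal, LinearMap.det_toMatrix,
    LinearMap.det_restrictScalars, LinearMap.det_toLin, Finset.prod_const, Finset.card_univ,
    Algebra.discr_def]

theorem isSquare_signedDiscr_traceRestrict_iff [Fintype F] [Fintype K] (hF : ringChar F ≠ 2)
    (bK : Basis κ F K) (f : Basis ι K V) {B : BilinForm K V} (hB : B.SeparatingLeft)
    (hι : Even (Fintype.card ι)) :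
    IsSquare ((traceRestrict F B).signedDiscr (bK.smulTower f)) ↔ IsSquare (B.signedDiscr f) := by
  set m := Fintype.card κ
  set n := Fintype.card ι
  set D := Algebra.discr F bK
  set G := (toMatrix₂ f f B).det
  have hG : G ≠ 0 := (LinearMap.separatingLeft_iff_det_ne_zero f).mp hB
  have hD : D ≠ 0 := Algebra.discr_not_zero_of_basis F bK
  have hnorm_neg_one : Algebra.norm F (-1 : K) = (-1) ^ m := by
    rw [← map_one (algebraMap F K), ← map_neg, Algebra.norm_algebraMap, finrank_eq_card_basis bK]
  have hn2 : 2 ∣ n := even_iff_two_dvd.mp hι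
  rw [signedDiscr, signedDiscr, det_toMatrix₂_traceRestrict, Fintype.card_prod,
    (hι.mul_left m).neg_one_pow_mul_pred_div_two, hι.neg_one_pow_mul_pred_div_two,
    Nat.mul_div_assoc _ hn2]
  calc IsSquare ((-1) ^ (m * (n / 2)) * (D ^ n * Algebra.norm F G))
      ↔ IsSquare ((D ^ (n / 2)) ^ 2 * Algebra.norm F ((-1) ^ (n / 2) * G)) := by
        rw [map_mul, map_pow, hnorm_neg_one, ← pow_mul, ← pow_mul, Nat.div_mul_cancel hn2]
        exact iff_of_eq (congrArg IsSquare (by ring))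
    _ ↔ IsSquare ((-1) ^ (n / 2) * G) := by
      rw [isSquare_sq_mul_iff (pow_ne_zero _ hD), FiniteField.isSquare_norm_iff hF
        (mul_ne_zero (pow_ne_zero _ (neg_ne_zero.mpr one_ne_zero)) hG)]

end TraceRestrict

end LinearMap.BilinForm

theorem statement9_general {F K V : Type*} [Field F] [Fintype F] [Field K] [Fintype K]
    [Algebra F K] [AddCommGroup V] [Module K V] [Module F V] [IsScalarTower F K V]
    [FiniteDimensional K V]
    (q : ℕ) (hodd : Odd q)
    (hF : Fintype.card F = q)
    (Q : QuadraticForm K V)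
    (hnd : ∀ x : V, (∀ y : V, polar (⇑Q) x y = 0) → x = 0)
    (heven : Even (Module.finrank K V)) :
    -- `T ∘ Q` is nondegenerate over `F` (its polarization is `T ∘ (polarization of Q)`)
    (∀ x : V, (∀ y : V, Algebra.trace F K (polar (⇑Q) x y) = 0) → x = 0) ∧
    -- `disc (T ∘ Q)` is trivial iff `disc Q` is trivial
    (∀ (N n : ℕ) (e : Module.Basis (Fin N) F V) (f : Module.Basis (Fin n) K V),
      (IsSquare ((-1 : F) ^ (N * (N - 1) / 2) *
          (Matrix.of fun i j => Algebra.trace F K (polar (⇑Q) (e i) (e j))).det) ↔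
        IsSquare ((-1 : K) ^ (n * (n - 1) / 2) *
          (Matrix.of fun i j => polar (⇑Q) (f i) (f j)).det))) := by
  have hB : (polarBilin Q).SeparatingLeft := hnd
  refine ⟨SeparatingLeft.traceRestrict F hB, fun N n e f => ?_⟩
  have hF2 : ringChar F ≠ 2 := by
    rw [Ne, FiniteField.even_card_iff_char_two, hF, Nat.odd_iff.mp hodd]; decide
  have hn : Even (Fintype.card (Fin n)) := by rwa [← finrank_eq_card_basis f]
  have key := isSquare_signedDiscr_traceRestrict_iff F hF2 (finBasis F K) f hB hn
  rw [← isSquare_signedDiscr_iff_of_basis _ e] at key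
  simpa only [signedDiscr_eq_of_fin, traceRestrict_apply, polarBilin_apply_apply] using key

/-- Let `q` be an odd prime power, `d ≥ 1`, and `T : 𝔽_{q^d} → 𝔽_q` the
field trace.  For a nondegenerate quadratic space `(V, Q)` over `𝔽_{q^d}` of even
dimension, `T ∘ Q` is a nondegenerate quadratic form on `V` viewed as an `𝔽_q`-space, and
`disc (T ∘ Q)` is trivial iff `disc Q` is trivial. -/
theorem statement9 {F K V : Type*} [Field F] [Fintype F] [Field K] [Fintype K]
    [Algebra F K] [AddCommGroup V] [Module K V] [Module F V] [IsScalarTower F K V]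
    [FiniteDimensional K V]
    (q d : ℕ) (hq : IsPrimePow q) (hodd : Odd q) (hd : 1 ≤ d)
    (hF : Fintype.card F = q) (hK : Fintype.card K = q ^ d)
    (Q : QuadraticForm K V)
    (hnd : ∀ x : V, (∀ y : V, polar (⇑Q) x y = 0) → x = 0)
    (heven : Even (Module.finrank K V)) :
    -- `T ∘ Q` is nondegenerate over `F` (its polarization is `T ∘ (polarization of Q)`)
    (∀ x : V, (∀ y : V, Algebra.trace F K (polar (⇑Q) x y) = 0) → x = 0) ∧
    -- `disc (T ∘ Q)` is trivial iff `disc Q` is trivial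
    (∀ (N n : ℕ) (e : Module.Basis (Fin N) F V) (f : Module.Basis (Fin n) K V),
      (IsSquare ((-1 : F) ^ (N * (N - 1) / 2) *
          (Matrix.of fun i j => Algebra.trace F K (polar (⇑Q) (e i) (e j))).det) ↔
        IsSquare ((-1 : K) ^ (n * (n - 1) / 2) *
          (Matrix.of fun i j => polar (⇑Q) (f i) (f j)).det))) :=
  statement9_general q hodd hF Q hnd heven
end

section
/- Let R be a discrete valuation ring with maximal ideal generated by π, residue field F = R/(π), and fraction field K. Let G be a finite group, V a finite-dimensional K-vector space with representation ρ : G → GL(V), and Q a nondegenerate G-invariant quadratic form on V with polarization B. Let M ⊆ V be a ρ(G)-invariant R-lattice with B(M, M) ⊆ R. Assume that either 2 is a unit in R, or the trivial F[G]-module is not a composition factor of the F[G]-module M/πM. Then Q(M) ⊆ R, i.e. the lattice M is even. -/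
/-!
If `2` is a unit, `Q x = B(x, x) / 2`. Otherwise `π ∣ 2`, and we look at the `R[G]`-submodules
`Lₙ = {x ∈ M | πⁿ Q(x) ∈ R}` of `M` (they are submodules because `B(M, M) ⊆ R`). Since `M` is
finitely generated, `M = Lₙ` for some `n`. If `M = Lₙ₊₁ ≠ Lₙ`, then `π M ⊆ Lₙ` because
`Q(π x) = π² Q(x)`, and `g x - x ∈ Lₙ` for `x ∈ M` because `Q(g x - x) = 2 Q(x) - B(g x, x)`;
so `M / Lₙ` is a nonzero subquotient of `M / π M` with trivial `G`-action. Hence `M = L₀`.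
-/

open QuadraticMap IsLocalization

namespace QuadraticForm

variable {R K V : Type*} [CommRing R] [Field K] [Algebra R K]
  [AddCommGroup V] [Module K V] (Q : QuadraticForm K V)

theorem isInteger_of_isUnit_two (h2 : IsUnit (2 : R)) {x : V}
    (hx : IsInteger R (polar Q x x)) : IsInteger R (Q x) := by
  obtain ⟨u, hu⟩ := h2
  have hQ : Q x = (↑u⁻¹ : R) • polar Q x x := by
    rw [polar_self, ← Nat.cast_smul_eq_nsmul R, Nat.cast_ofNat, ← hu, smul_smul,
      Units.inv_mul, one_smul]
  rw [hQ]
  exact isInteger_smul hx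

variable [Module R V] [IsScalarTower R K V] {M : Submodule R V}

def levelSubmodule (M : Submodule R V) (hM : ∀ x ∈ M, ∀ y ∈ M, IsInteger R (polar Q x y))
    (a : R) : Submodule R V where
  carrier := {x | x ∈ M ∧ IsInteger R (a • Q x)}
  zero_mem' := ⟨M.zero_mem, by simpa using isInteger_zero⟩
  add_mem' := by
    rintro x y ⟨hxM, hx⟩ ⟨hyM, hy⟩
    refine ⟨M.add_mem hxM hyM, ?_⟩
    rw [QuadraticMap.map_add (⇑Q), smul_add, smul_add]
    exact isInteger_add (isInteger_add hx hy) (isInteger_smul (hM x hxM y hyM))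
  smul_mem' := by
    rintro r x ⟨hxM, hx⟩
    refine ⟨M.smul_mem r hxM, ?_⟩
    rw [map_smul_of_tower, smul_comm]
    exact isInteger_smul hx

variable {Q} {hM : ∀ x ∈ M, ∀ y ∈ M, IsInteger R (polar Q x y)}

theorem mem_levelSubmodule {a : R} {x : V} :
    x ∈ Q.levelSubmodule M hM a ↔ x ∈ M ∧ IsInteger R (a • Q x) :=
  Iff.rfl

theorem levelSubmodule_le (a : R) : Q.levelSubmodule M hM a ≤ M :=
  fun _ hx => hx.1

theorem levelSubmodule_mono {a b : R} (hab : a ∣ b) :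
    Q.levelSubmodule M hM a ≤ Q.levelSubmodule M hM b := by
  obtain ⟨d, rfl⟩ := hab
  rintro x ⟨hxM, hx⟩
  refine ⟨hxM, ?_⟩
  rw [mul_comm, mul_smul]
  exact isInteger_smul hx

theorem exists_le_levelSubmodule [IsFractionRing R K] (hfg : M.FG) :
    ∃ b ∈ nonZeroDivisors R, M ≤ Q.levelSubmodule M hM b := by
  classical
  obtain ⟨s, rfl⟩ := hfg
  obtain ⟨b, hb⟩ := exist_integer_multiples_of_finset (nonZeroDivisors R) (s.image Q)
  refine ⟨b, b.2, Submodule.span_le.2 fun e he => ⟨Submodule.subset_span he, ?_⟩⟩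
  exact hb _ (Finset.mem_image_of_mem _ he)

theorem exists_le_levelSubmodule_pow [IsDomain R] [IsDiscreteValuationRing R]
    [IsFractionRing R K] {π : R} (hπ : Irreducible π) (hfg : M.FG) :
    ∃ n : ℕ, M ≤ Q.levelSubmodule M hM (π ^ n) := by
  obtain ⟨b, hb, hMb⟩ := exists_le_levelSubmodule (Q := Q) (hM := hM) hfg
  obtain ⟨n, hn⟩ :=
    IsDiscreteValuationRing.associated_pow_irreducible (nonZeroDivisors.ne_zero hb) hπ
  exact ⟨n, hMb.trans (levelSubmodule_mono hn.dvd)⟩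

theorem smul_mem_levelSubmodule {a b : R} {x : V} (hx : x ∈ Q.levelSubmodule M hM (a * b)) :
    b • x ∈ Q.levelSubmodule M hM a := by
  refine ⟨M.smul_mem b hx.1, ?_⟩
  rw [map_smul_of_tower, smul_smul, show a * (b * b) = b * (a * b) by ring, mul_smul]
  exact isInteger_smul hx.2

theorem span_singleton_smul_le_levelSubmodule {a b : R}
    (hle : M ≤ Q.levelSubmodule M hM (a * b)) :
    Ideal.span {b} • M ≤ Q.levelSubmodule M hM a := by
  refine Submodule.smul_le.2 fun r hr x hx => ?_
  obtain ⟨d, rfl⟩ := Ideal.mem_span_singleton'.1 hr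
  rw [mul_smul]
  exact Submodule.smul_mem _ d (smul_mem_levelSubmodule (hle hx))

theorem map_mem_levelSubmodule {f : V → V} (hf : ∀ x, Q (f x) = Q x)
    (hfM : ∀ x ∈ M, f x ∈ M) {a : R} {x : V} (hx : x ∈ Q.levelSubmodule M hM a) :
    f x ∈ Q.levelSubmodule M hM a :=
  ⟨hfM x hx.1, by rw [hf]; exact hx.2⟩

theorem sub_mem_levelSubmodule {f : V → V} (hf : ∀ x, Q (f x) = Q x)
    (hfM : ∀ x ∈ M, f x ∈ M) {a b c : R} (hc : (2 : R) = b * c)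
    (hle : M ≤ Q.levelSubmodule M hM (a * b)) {x : V} (hx : x ∈ M) :
    f x - x ∈ Q.levelSubmodule M hM a := by
  refine ⟨M.sub_mem (hfM x hx) hx, ?_⟩
  have hQ : Q (f x - x) = 2 * Q x - polar Q (f x) x := by
    rw [sub_eq_add_neg, QuadraticMap.map_add (⇑Q), QuadraticMap.map_neg, polar_neg_right, hf]
    ring
  have h2 : algebraMap R K b * algebraMap R K c = 2 := by rw [← map_mul, ← hc, map_ofNat]
  have key : a • Q (f x - x) = c • ((a * b) • Q x) + (-a) • polar Q (f x) x := by
    simp only [Algebra.smul_def, map_mul, map_neg, hQ]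
    linear_combination (algebraMap R K a * Q x) * h2.symm
  rw [key]
  exact isInteger_add (isInteger_smul (hle hx).2) (isInteger_smul (hM _ (hfM x hx) x hx))

theorem exists_trivial_subquotient {G : Type*} [Monoid G] (ρ : Representation K G V)
    (hinv : ∀ (g : G) (x : V), Q (ρ g x) = Q x) (hMinv : ∀ g : G, ∀ x ∈ M, ρ g x ∈ M)
    {a b c : R} (hc : (2 : R) = b * c) (hle : M ≤ Q.levelSubmodule M hM (a * b))
    (hnot : ¬ M ≤ Q.levelSubmodule M hM a) :
    ∃ P₁ P₂ : Submodule R V, Ideal.span {b} • M ≤ P₁ ∧ P₁ < P₂ ∧ P₂ ≤ M ∧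
      (∀ g : G, ∀ x ∈ P₁, ρ g x ∈ P₁) ∧ (∀ g : G, ∀ x ∈ P₂, ρ g x ∈ P₂) ∧
      (∀ g : G, ∀ x ∈ P₂, ρ g x - x ∈ P₁) :=
  ⟨Q.levelSubmodule M hM a, M, span_singleton_smul_le_levelSubmodule hle,
    lt_of_le_not_ge (levelSubmodule_le a) hnot, le_rfl,
    fun g _ hx => map_mem_levelSubmodule (hinv g) (hMinv g) hx, hMinv,
    fun g _ hx => sub_mem_levelSubmodule (hinv g) (hMinv g) hc hle hx⟩

end QuadraticForm

open QuadraticForm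

theorem statement10_general {R K G V : Type*}
    [CommRing R] [IsDomain R] [IsDiscreteValuationRing R]
    [Field K] [Algebra R K] [IsFractionRing R K]
    [Group G]
    [AddCommGroup V] [Module K V] [Module R V] [IsScalarTower R K V]
    (π : R) (hπ : Irreducible π)
    (ρ : Representation K G V)
    (Q : QuadraticForm K V)
    (hinv : ∀ (g : G) (x : V), Q (ρ g x) = Q x)
    (M : Submodule R V) (hfg : M.FG)
    (hMinv : ∀ g : G, ∀ x ∈ M, ρ g x ∈ M)
    -- `M` is integral: `B(M, M) ⊆ R`
    (hint : ∀ x ∈ M, ∀ y ∈ M, ∃ r : R, algebraMap R K r = polar (⇑Q) x y)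
    -- `2` is a unit in `R`, or the trivial `F[G]`-module is not a composition factor
    -- of `M/πM`:
    (halt : IsUnit (2 : R) ∨
      ¬ ∃ P₁ P₂ : Submodule R V, Ideal.span {π} • M ≤ P₁ ∧ P₁ < P₂ ∧ P₂ ≤ M ∧
        (∀ g : G, ∀ x ∈ P₁, ρ g x ∈ P₁) ∧ (∀ g : G, ∀ x ∈ P₂, ρ g x ∈ P₂) ∧
        (∀ g : G, ∀ x ∈ P₂, ρ g x - x ∈ P₁)) :
    -- `M` is even: `Q(M) ⊆ R`
    ∀ x ∈ M, ∃ r : R, algebraMap R K r = Q x := by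
  rcases em (IsUnit (2 : R)) with h2 | h2
  · exact fun x hx => isInteger_of_isUnit_two Q h2 (hint x hx x hx)
  obtain ⟨c, hc⟩ : π ∣ 2 := by
    rw [← Ideal.mem_span_singleton, ← hπ.maximalIdeal_eq]
    exact (IsLocalRing.mem_maximalIdeal _).2 h2
  have hstep : ∀ m : ℕ, M ≤ Q.levelSubmodule M hint (π ^ (m + 1)) →
      M ≤ Q.levelSubmodule M hint (π ^ m) := by
    intro m hle
    by_contra hnot
    rw [pow_succ] at hle
    exact halt.resolve_left h2 (exists_trivial_subquotient ρ hinv hMinv hc hle hnot)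
  have hdescend : ∀ n : ℕ, M ≤ Q.levelSubmodule M hint (π ^ n) →
      M ≤ Q.levelSubmodule M hint 1 := by
    intro n
    induction n with
    | zero => simp only [pow_zero, imp_self]
    | succ m ih => exact fun hle => ih (hstep m hle)
  obtain ⟨n, hn⟩ := exists_le_levelSubmodule_pow (Q := Q) (hM := hint) hπ hfg
  intro x hx
  have hQx := (hdescend n hn hx).2
  rw [one_smul] at hQx
  exact hQx

/-- Let `R` be a DVR with uniformizer `π`, residue field `F = R/(π)` and
fraction field `K`.  Let `ρ` be a representation of a finite group `G` on a
finite-dimensional `K`-space `V` with a nondegenerate `G`-invariant quadratic form `Q`,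
and let `M` be a `ρ(G)`-invariant `R`-lattice with `B(M, M) ⊆ R`.  If `2` is a unit in `R`,
or the trivial `F[G]`-module is not a composition factor of `M/πM`, then `Q(M) ⊆ R`. -/
theorem statement10 {R K G V : Type*}
    [CommRing R] [IsDomain R] [IsDiscreteValuationRing R]
    [Field K] [Algebra R K] [IsFractionRing R K]
    [Group G] [Finite G]
    [AddCommGroup V] [Module K V] [Module R V] [IsScalarTower R K V]
    [FiniteDimensional K V]
    (π : R) (hπ : Irreducible π)
    (ρ : Representation K G V)
    (Q : QuadraticForm K V)
    (hnd : ∀ x : V, (∀ y : V, polar (⇑Q) x y = 0) → x = 0)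
    (hinv : ∀ (g : G) (x : V), Q (ρ g x) = Q x)
    (M : Submodule R V) (hfg : M.FG)
    (hspan : Submodule.span K (M : Set V) = ⊤)
    (hMinv : ∀ g : G, ∀ x ∈ M, ρ g x ∈ M)
    -- `M` is integral: `B(M, M) ⊆ R`
    (hint : ∀ x ∈ M, ∀ y ∈ M, ∃ r : R, algebraMap R K r = polar (⇑Q) x y)
    -- `2` is a unit in `R`, or the trivial `F[G]`-module is not a composition factor
    -- of `M/πM`:
    (halt : IsUnit (2 : R) ∨
      ¬ ∃ P₁ P₂ : Submodule R V, Ideal.span {π} • M ≤ P₁ ∧ P₁ < P₂ ∧ P₂ ≤ M ∧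
        (∀ g : G, ∀ x ∈ P₁, ρ g x ∈ P₁) ∧ (∀ g : G, ∀ x ∈ P₂, ρ g x ∈ P₂) ∧
        (∀ g : G, ∀ x ∈ P₂, ρ g x - x ∈ P₁)) :
    -- `M` is even: `Q(M) ⊆ R`
    ∀ x ∈ M, ∃ r : R, algebraMap R K r = Q x :=
  statement10_general π hπ ρ Q hinv M hfg hMinv hint halt
end

section
/- Let R be a discrete valuation ring with maximal ideal generated by π, residue field F = R/(π), and fraction field K. Let G be a finite group, V a finite-dimensional K-vector space with representation ρ : G → GL(V), and Q a nondegenerate G-invariant quadratic form on V with polarization B. Assume that either 2 is a unit in R, or for every ρ(G)-invariant R-lattice N in V the trivial F[G]-module is not a composition factor of N/πN. Let M be maximal (with respect to inclusion) among ρ(G)-invariant even R-lattices in V, with dual lattice M# = {x ∈ V : B(x, M) ⊆ R}. Then π·M# ⊆ M ⊆ M#, one has π·Q(M#) ⊆ R, and the induced F-valued maps q₁ on M/(π·M#) given by q₁(x + π·M#) := Q(x) mod (π) and q₂ on M#/M given by q₂(x + M) := π·Q(x) mod (π) are well-defined nondegenerate G-invariant quadratic forms on these F[G]-modules. -/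
open QuadraticMap

/-- The dual lattice set `M^# = {x ∈ V : B(x, M) ⊆ R}` of `M` with respect to the
polarization of `Q`. -/
def dualLatticeSet {R K V : Type*} [CommRing R] [Field K] [Algebra R K]
    [AddCommGroup V] [Module K V] [Module R V] [IsScalarTower R K V]
    (Q : QuadraticForm K V) (M : Submodule R V) : Set V :=
  {x : V | ∀ m ∈ M, ∃ r : R, algebraMap R K r = polar (⇑Q) x m}

/-!
Maximality of `M` enters only through one consequence: an invariant lattice `L ⊇ M` on which
`B` is `R`-valued is even, hence equals `M`. Evenness holds because `Q(x) = B(x, x)/2` when `2`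
is a unit; otherwise, if `π^(j+1) Q(L) ⊆ R`, the `x ∈ L` with `π^j Q(x) ∈ R` form an invariant
submodule containing `πL` with `G` acting trivially on the quotient, since
`Q(gx - x) = B(x, x) - B(gx, x)`; so it is all of `L`, and descending induction on `j` gives
`Q(L) ⊆ R`.

Applied to `L = π^(t+1) M^# + M` this turns `π^(t+2) M^# ⊆ M` into `π^(t+1) M^# ⊆ M`, whence
`π M^# ⊆ M`; applied to `L = M + R[G]x` for `x` with `B(x, M^#) ⊆ R` it gives `M^## = M`, the
nondegeneracy of `q₂`. The same evenness argument for the form `πQ` on `M^#` gives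
`π Q(M^#) ⊆ R`, and everything else is the expansion `Q(x + y) = Q(x) + Q(y) + B(x, y)`.
-/

open Submodule Pointwise

namespace EvenLattice

section Dual

variable {R K V : Type*} [CommRing R] [Field K] [Algebra R K]
  [AddCommGroup V] [Module K V] [Module R V] [IsScalarTower R K V]

def dualLattice (Q : QuadraticForm K V) (M : Submodule R V) : Submodule R V :=
  LinearMap.BilinForm.dualSubmodule (polarBilin Q) M

variable {Q : QuadraticForm K V} {M N : Submodule R V}

theorem mem_dualLattice {x : V} :
    x ∈ dualLattice Q M ↔ ∀ y ∈ M, polar Q x y ∈ (algebraMap R K).range := by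
  simp only [dualLattice, LinearMap.BilinForm.mem_dualSubmodule, mem_one,
    polarBilin_apply_apply, RingHom.mem_range]

theorem coe_dualLattice : (dualLattice Q M : Set V) = dualLatticeSet Q M :=
  Set.ext fun _ => mem_dualLattice

theorem dualLattice_anti (h : M ≤ N) : dualLattice Q N ≤ dualLattice Q M :=
  fun _ hx => mem_dualLattice.mpr fun y hy => mem_dualLattice.mp hx y (h hy)

theorem le_dualLattice_comm : M ≤ dualLattice Q N ↔ N ≤ dualLattice Q M := by
  simp only [SetLike.le_def, mem_dualLattice]
  exact ⟨fun h y hy x hx => polar_comm Q x y ▸ h hx y hy,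
    fun h x hx y hy => polar_comm Q y x ▸ h hy x hx⟩

theorem mem_dualLattice_iff_le_comap {x : V} :
    x ∈ dualLattice Q M ↔ M ≤ (1 : Submodule R K).comap ((polarBilin Q x).restrictScalars R) :=
  Iff.rfl

theorem dualLattice_sup : dualLattice Q (M ⊔ N) = dualLattice Q M ⊓ dualLattice Q N := by
  ext x
  simp only [mem_inf, mem_dualLattice_iff_le_comap, sup_le_iff]

theorem mem_dualLattice_span {s : Set V} {x : V} :
    x ∈ dualLattice Q (span R s) ↔ ∀ y ∈ s, polar Q x y ∈ (algebraMap R K).range := by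
  rw [mem_dualLattice_iff_le_comap, span_le]
  simp only [Set.subset_def, SetLike.mem_coe, mem_comap, mem_one, RingHom.mem_range]
  rfl

theorem mem_dualLattice_smul (a : R) {x : V} :
    x ∈ dualLattice Q (a • M) ↔ a • x ∈ dualLattice Q M := by
  simp only [mem_dualLattice, mem_smul_pointwise_iff_exists, forall_exists_index, and_imp,
    forall_apply_eq_imp_iff₂, polar_smul_left_of_tower, polar_smul_right_of_tower]

theorem le_dualLattice_algebraMap_smul {a : R} (h : ∀ y ∈ N, a • y ∈ M) :
    dualLattice Q M ≤ dualLattice (algebraMap R K a • Q) N := fun x hx =>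
  mem_dualLattice.mpr fun y hy => by
    rw [FunLike.coe_smul, polar_smul, smul_eq_mul, ← Algebra.smul_def,
      ← polar_smul_right_of_tower]
    exact mem_dualLattice.mp hx _ (h y hy)

end Dual

section Lattice

variable {R K V : Type*} [CommRing R] [Field K] [Algebra R K]
  [AddCommGroup V] [Module K V] [Module R V] [IsScalarTower R K V]
  {Q : QuadraticForm K V} {M N : Submodule R V}

def IsEven (Q : QuadraticForm K V) (M : Submodule R V) : Prop :=
  ∀ x ∈ M, Q x ∈ (algebraMap R K).range

theorem IsEven.le_dualLattice (h : IsEven Q M) : M ≤ dualLattice Q M := fun x hx =>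
  mem_dualLattice.mpr fun y hy =>
    sub_mem (sub_mem (h _ (M.add_mem hx hy)) (h x hx)) (h y hy)

theorem IsEven.of_isUnit_two (h2 : IsUnit (2 : R)) (hM : M ≤ dualLattice Q M) : IsEven Q M := by
  intro x hx
  have hxx := mem_dualLattice.mp (hM hx) x hx
  rw [polar_self, two_nsmul, ← two_mul] at hxx
  obtain ⟨u, hu⟩ := h2
  have : Q x = algebraMap R K ↑u⁻¹ * (2 * Q x) := by
    rw [← mul_assoc, ← map_ofNat (algebraMap R K) 2, ← map_mul, ← hu, Units.inv_mul, map_one,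
      one_mul]
  rw [this]
  exact mul_mem (RingHom.mem_range_self _ _) hxx

omit [Algebra R K] [IsScalarTower R K V] in
theorem span_eq_top_of_le (hM : span K (M : Set V) = ⊤) (h : M ≤ N) :
    span K (N : Set V) = ⊤ :=
  top_unique (hM ▸ span_mono h)

theorem dualLattice_fg [IsNoetherianRing R] [FiniteDimensional K V]
    (hQ : ∀ x : V, (∀ y : V, polar Q x y = 0) → x = 0)
    (hM : span K (M : Set V) = ⊤) : (dualLattice Q M).FG := by
  classical
  have hB : (polarBilin Q).Nondegenerate :=
    ⟨hQ, fun y hy => hQ y fun x => polar_comm Q y x ▸ hy x⟩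
  let b := Module.Basis.ofSpan hM.ge
  have hbM : span R (Set.range b) ≤ M := span_le.mpr (Module.Basis.ofSpan_subset _)
  refine FG.of_le ?_ (dualLattice_anti hbM)
  rw [dualLattice, LinearMap.BilinForm.dualSubmodule_span_of_basis _ hB]
  exact fg_span (Set.finite_range _)

end Lattice

section Invariant

variable {R K G V : Type*} [CommRing R] [Field K] [Group G]
  [AddCommGroup V] [Module K V] [Module R V]
  {ρ : Representation K G V} {M N : Submodule R V}

def IsInvariant (ρ : Representation K G V) (M : Submodule R V) : Prop :=
  ∀ g : G, ∀ x ∈ M, ρ g x ∈ M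

theorem IsInvariant.sup (hM : IsInvariant ρ M) (hN : IsInvariant ρ N) :
    IsInvariant ρ (M ⊔ N) := by
  intro g x hx
  obtain ⟨y, hy, z, hz, rfl⟩ := mem_sup.mp hx
  rw [map_add]
  exact add_mem_sup (hM g y hy) (hN g z hz)

variable [Algebra R K] [IsScalarTower R K V] {Q : QuadraticForm K V}

theorem IsInvariant.smul (hM : IsInvariant ρ M) (a : R) : IsInvariant ρ (a • M) := by
  intro g x hx
  obtain ⟨y, hy, rfl⟩ := (mem_smul_pointwise_iff_exists _ _ _).mp hx
  rw [LinearMap.map_smul_of_tower]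
  exact smul_mem_pointwise_smul _ _ _ (hM g y hy)

theorem isInvariant_span_orbit (x : V) :
    IsInvariant ρ (span R (Set.range fun g : G => ρ g x)) := by
  intro g y hy
  induction hy using span_induction with
  | mem _ h =>
    obtain ⟨h, rfl⟩ := h
    exact subset_span ⟨g * h, by simp only [map_mul, Module.End.mul_apply]⟩
  | zero => rw [map_zero]; exact zero_mem _
  | add _ _ _ _ h₁ h₂ => rw [map_add]; exact add_mem h₁ h₂
  | smul r _ _ h => rw [LinearMap.map_smul_of_tower]; exact smul_mem _ r h

theorem polar_apply_left (hQ : ∀ g x, Q (ρ g x) = Q x) (g : G) (x y : V) :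
    polar Q (ρ g x) y = polar Q x (ρ g⁻¹ y) := by
  conv_lhs => rw [← ρ.self_inv_apply g y]
  simp only [polar, ← map_add, hQ]

theorem IsInvariant.dualLattice (hQ : ∀ g x, Q (ρ g x) = Q x) (hM : IsInvariant ρ M) :
    IsInvariant ρ (dualLattice Q M) := fun g x hx => mem_dualLattice.mpr fun y hy => by
  rw [polar_apply_left hQ]
  exact mem_dualLattice.mp hx _ (hM g⁻¹ y hy)

end Invariant

section DVR

variable {R K V : Type*} [CommRing R] [IsDomain R] [IsDiscreteValuationRing R]
  [Field K] [Algebra R K] [IsFractionRing R K]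
  [AddCommGroup V] [Module K V] [Module R V] [IsScalarTower R K V]
  {π : R} {M N : Submodule R V}

theorem exists_pow_mul_mem_range (hπ : Irreducible π) (c : K) :
    ∃ n : ℕ, algebraMap R K (π ^ n) * c ∈ (algebraMap R K).range := by
  obtain ⟨⟨a, s⟩, h⟩ := IsLocalization.surj (nonZeroDivisors R) c
  obtain ⟨n, u, hu⟩ := IsDiscreteValuationRing.associated_pow_irreducible
    (nonZeroDivisors.ne_zero s.2) hπ
  refine ⟨n, ↑u * a, ?_⟩
  rw [← hu, map_mul, map_mul, ← h]
  ring

omit [IsDomain R] [IsDiscreteValuationRing R] [IsFractionRing R K] in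
theorem pow_smul_mem_of_le {x : V} {s t : ℕ} (h : π ^ s • x ∈ M) (hst : s ≤ t) :
    π ^ t • x ∈ M := by
  rw [← Nat.sub_add_cancel hst, pow_add, mul_smul]
  exact M.smul_mem _ h

theorem exists_pow_smul_mem (hπ : Irreducible π) (hM : span K (M : Set V) = ⊤) (y : V) :
    ∃ t : ℕ, π ^ t • y ∈ M := by
  have hy : y ∈ span K (M : Set V) := hM ▸ mem_top
  induction hy using span_induction with
  | mem x hx => exact ⟨0, by simpa using hx⟩
  | zero => exact ⟨0, by simp⟩
  | add x y _ _ hx hy =>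
    obtain ⟨s, hs⟩ := hx
    obtain ⟨t, ht⟩ := hy
    exact ⟨s + t, by
      rw [smul_add]
      exact add_mem (pow_smul_mem_of_le hs (by omega)) (pow_smul_mem_of_le ht (by omega))⟩
  | smul c x _ hx =>
    obtain ⟨t, ht⟩ := hx
    obtain ⟨n, r, hr⟩ := exists_pow_mul_mem_range hπ c
    refine ⟨n + t, ?_⟩
    have : π ^ (n + t) • c • x = r • π ^ t • x := by
      rw [← algebraMap_smul K r, ← algebraMap_smul K (π ^ t), ← algebraMap_smul K, smul_smul,
        smul_smul, hr, pow_add, map_mul, mul_right_comm]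
    rw [this]
    exact M.smul_mem r ht

theorem exists_pow_smul_le (hπ : Irreducible π) (hM : span K (M : Set V) = ⊤) (hN : N.FG) :
    ∃ t : ℕ, ∀ x ∈ N, π ^ t • x ∈ M := by
  obtain ⟨s, rfl⟩ := hN
  choose T hT using exists_pow_smul_mem hπ hM
  refine ⟨s.sup T, fun x hx => ?_⟩
  induction hx using span_induction with
  | mem y hy => exact pow_smul_mem_of_le (hT y) (Finset.le_sup hy)
  | zero => simp
  | add _ _ _ _ hx hy => rw [smul_add]; exact add_mem hx hy
  | smul r _ _ hx => rw [smul_comm]; exact M.smul_mem r hx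

end DVR

section EvenSubmodule

variable {R K V : Type*} [CommRing R] [Field K] [Algebra R K]
  [AddCommGroup V] [Module K V] [Module R V] [IsScalarTower R K V]
  {Q : QuadraticForm K V} {N : Submodule R V}

def evenSubmodule (Q : QuadraticForm K V) (N : Submodule R V) (hN : N ≤ dualLattice Q N)
    (a : R) : Submodule R V where
  carrier := {x | x ∈ N ∧ algebraMap R K a * Q x ∈ (algebraMap R K).range}
  add_mem' {x y} hx hy := ⟨N.add_mem hx.1 hy.1, by
    rw [QuadraticMap.map_add Q, mul_add, mul_add]
    exact add_mem (add_mem hx.2 hy.2)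
      (mul_mem (RingHom.mem_range_self _ a) (mem_dualLattice.mp (hN hx.1) y hy.1))⟩
  zero_mem' := ⟨N.zero_mem, by simp⟩
  smul_mem' r x hx := ⟨N.smul_mem r hx.1, by
    rw [QuadraticMap.map_smul_of_tower, Algebra.smul_def, mul_left_comm]
    exact mul_mem (RingHom.mem_range_self _ _) hx.2⟩

variable {hN : N ≤ dualLattice Q N}

theorem evenSubmodule_le (a : R) : evenSubmodule Q N hN a ≤ N := fun _ hx => hx.1

theorem evenSubmodule_le_mul (a b : R) :
    evenSubmodule Q N hN a ≤ evenSubmodule Q N hN (b * a) := fun x hx => ⟨hx.1, by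
  rw [map_mul, mul_assoc]
  exact mul_mem (RingHom.mem_range_self _ b) hx.2⟩

theorem IsEven.of_le_evenSubmodule_one (h : N ≤ evenSubmodule Q N hN 1) : IsEven Q N :=
  fun x hx => by simpa using (h hx).2

theorem exists_le_evenSubmodule_pow [IsDomain R] [IsDiscreteValuationRing R]
    [IsFractionRing R K] {π : R} (hπ : Irreducible π) (hfg : N.FG) :
    ∃ n : ℕ, N ≤ evenSubmodule Q N hN (π ^ n) := by
  obtain ⟨s, rfl⟩ := hfg
  choose T hT using fun y : V => exists_pow_mul_mem_range hπ (Q y)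
  refine ⟨s.sup T, span_le.mpr fun y hy => ?_⟩
  rw [SetLike.mem_coe, ← pow_sub_mul_pow π (Finset.le_sup hy)]
  exact evenSubmodule_le_mul _ _ ⟨subset_span hy, hT y⟩

end EvenSubmodule

section NoTrivialFactor

variable {R K G V : Type*} [CommRing R] [Field K] [Algebra R K] [Group G]
  [AddCommGroup V] [Module K V] [Module R V] [IsScalarTower R K V]
  {ρ : Representation K G V} {Q : QuadraticForm K V} {π : R} {N : Submodule R V}

/-- `N/πN` has no composition factor on which `G` acts trivially. -/
def NoTrivialFactor (ρ : Representation K G V) (π : R) (N : Submodule R V) : Prop :=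
  ¬ ∃ P₁ P₂ : Submodule R V, Ideal.span {π} • N ≤ P₁ ∧ P₁ < P₂ ∧ P₂ ≤ N ∧
    IsInvariant ρ P₁ ∧ IsInvariant ρ P₂ ∧ ∀ g : G, ∀ x ∈ P₂, ρ g x - x ∈ P₁

variable {hN : N ≤ dualLattice Q N}

theorem le_evenSubmodule_of_le_evenSubmodule_mul (hQ : ∀ g x, Q (ρ g x) = Q x)
    (hinv : IsInvariant ρ N) (hfac : NoTrivialFactor ρ π N) {a : R}
    (h : N ≤ evenSubmodule Q N hN (π * a)) : N ≤ evenSubmodule Q N hN a := by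
  by_contra hle
  refine hfac ⟨evenSubmodule Q N hN a, N, ?_,
    lt_of_le_of_ne (evenSubmodule_le a) fun he => hle he.ge, le_rfl, ?_, hinv, ?_⟩
  · rw [smul_le]
    intro r hr x hx
    obtain ⟨b, rfl⟩ := Ideal.mem_span_singleton'.mp hr
    refine ⟨N.smul_mem _ hx, ?_⟩
    have : algebraMap R K a * Q ((b * π) • x) =
        algebraMap R K (b * b * π) * (algebraMap R K (π * a) * Q x) := by
      rw [QuadraticMap.map_smul_of_tower, Algebra.smul_def]
      simp only [map_mul]
      ring
    rw [this]
    exact mul_mem (RingHom.mem_range_self _ _) (h hx).2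
  · intro g x hx
    exact ⟨hinv g x hx.1, by rw [hQ]; exact hx.2⟩
  · intro g x hx
    refine ⟨sub_mem (hinv g x hx) hx, ?_⟩
    have : Q (ρ g x - x) = polar Q x x - polar Q (ρ g x) x := by
      rw [polar_self, sub_eq_add_neg, QuadraticMap.map_add Q, QuadraticMap.map_neg,
        polar_neg_right, hQ, two_nsmul]
      ring
    rw [this, mul_sub]
    exact sub_mem (mul_mem (RingHom.mem_range_self _ _) (mem_dualLattice.mp (hN hx) x hx))
      (mul_mem (RingHom.mem_range_self _ _) (mem_dualLattice.mp (hN (hinv g x hx)) x hx))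

variable [IsDomain R] [IsDiscreteValuationRing R] [IsFractionRing R K]

theorem IsEven.of_noTrivialFactor (hπ : Irreducible π) (hQ : ∀ g x, Q (ρ g x) = Q x)
    (hfg : N.FG) (hinv : IsInvariant ρ N) (hfac : NoTrivialFactor ρ π N)
    (hN : N ≤ dualLattice Q N) : IsEven Q N := by
  obtain ⟨n, hn⟩ := exists_le_evenSubmodule_pow (hN := hN) hπ hfg
  refine IsEven.of_le_evenSubmodule_one (hN := hN) ?_
  induction n with
  | zero => simpa using hn
  | succ n ih =>
    exact ih (le_evenSubmodule_of_le_evenSubmodule_mul hQ hinv hfac (pow_succ' π n ▸ hn))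

theorem IsEven.of_le_dualLattice (hπ : Irreducible π)
    (halt : IsUnit (2 : R) ∨ ∀ N : Submodule R V, N.FG → span K (N : Set V) = ⊤ →
      IsInvariant ρ N → NoTrivialFactor ρ π N)
    (hQ : ∀ g x, Q (ρ g x) = Q x) (hfg : N.FG) (hspan : span K (N : Set V) = ⊤)
    (hinv : IsInvariant ρ N) (hN : N ≤ dualLattice Q N) : IsEven Q N :=
  halt.elim (fun h2 => .of_isUnit_two h2 hN)
    fun h => .of_noTrivialFactor hπ hQ hfg hinv (h N hfg hspan hinv) hN

end NoTrivialFactor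

section Maximal

variable {R K G V : Type*} [CommRing R] [Field K] [Algebra R K] [Group G]
  [AddCommGroup V] [Module K V] [Module R V] [IsScalarTower R K V]
  {ρ : Representation K G V} {Q : QuadraticForm K V} {π : R} {M : Submodule R V}

theorem dualLattice_dualLattice_le [Finite G] (hQ : ∀ g x, Q (ρ g x) = Q x)
    (hmax : ∀ L : Submodule R V, L.FG → IsInvariant ρ L → M ≤ L → L ≤ dualLattice Q L → L = M)
    (hM : M ≤ dualLattice Q M) (hMfg : M.FG) (hMinv : IsInvariant ρ M)
    (hDinv : IsInvariant ρ (dualLattice Q M)) :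
    dualLattice Q (dualLattice Q M) ≤ M := by
  intro x hx
  set O := span R (Set.range fun g : G => ρ g x)
  have hxD : x ∈ dualLattice Q M := dualLattice_anti hM hx
  have hOD : O ≤ dualLattice Q M := span_le.mpr <| Set.range_subset_iff.mpr fun g => hDinv g x hxD
  have hO : O ≤ dualLattice Q O := span_le.mpr <| Set.range_subset_iff.mpr fun g =>
    mem_dualLattice_span.mpr <| Set.forall_mem_range.mpr fun h => by
      rw [polar_apply_left hQ]
      exact mem_dualLattice.mp hx _ (hDinv _ _ (hDinv h x hxD))
  have hN : M ⊔ O ≤ dualLattice Q (M ⊔ O) := by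
    rw [dualLattice_sup]
    exact sup_le (le_inf hM (le_dualLattice_comm.mpr hOD)) (le_inf hOD hO)
  have hNM := hmax _ (hMfg.sup (fg_span (Set.finite_range _)))
    (hMinv.sup (isInvariant_span_orbit x)) le_sup_left hN
  exact hNM ▸ mem_sup_right (subset_span ⟨1, by simp⟩)

theorem pow_succ_smul_mem_of_pow_add_two_smul_mem
    (hmax : ∀ L : Submodule R V, L.FG → IsInvariant ρ L → M ≤ L → L ≤ dualLattice Q L → L = M)
    (hM : M ≤ dualLattice Q M) (hMfg : M.FG) (hMinv : IsInvariant ρ M)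
    (hDfg : (dualLattice Q M).FG) (hDinv : IsInvariant ρ (dualLattice Q M)) {t : ℕ}
    (h : ∀ x ∈ dualLattice Q M, π ^ (t + 2) • x ∈ M) :
    ∀ x ∈ dualLattice Q M, π ^ (t + 1) • x ∈ M := by
  set D := dualLattice Q M
  have hsD : π ^ (t + 1) • D ≤ D := fun _ hx => by
    obtain ⟨u, hu, rfl⟩ := (mem_smul_pointwise_iff_exists _ _ _).mp hx
    exact D.smul_mem _ hu
  have hs : π ^ (t + 1) • D ≤ dualLattice Q (π ^ (t + 1) • D) := fun _ hx => by
    obtain ⟨u, hu, rfl⟩ := (mem_smul_pointwise_iff_exists _ _ _).mp hx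
    rw [mem_dualLattice_smul, smul_smul, ← pow_add, show t + 1 + (t + 1) = t + (t + 2) by ring,
      pow_add, mul_smul]
    exact (dualLattice Q D).smul_mem _ (le_dualLattice_comm.mp le_rfl (h u hu))
  have hL : π ^ (t + 1) • D ⊔ M ≤ dualLattice Q (π ^ (t + 1) • D ⊔ M) := by
    rw [dualLattice_sup]
    exact sup_le (le_inf hs hsD) (le_inf (le_dualLattice_comm.mp hsD) hM)
  have hLM := hmax _ ((hDfg.map _).sup hMfg) ((hDinv.smul _).sup hMinv) le_sup_right hL
  exact fun x hx => hLM ▸ mem_sup_left (smul_mem_pointwise_smul _ _ _ hx)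

variable [IsDomain R] [IsDiscreteValuationRing R] [IsFractionRing R K]

theorem smul_mem_of_mem_dualLattice (hπ : Irreducible π)
    (hmax : ∀ L : Submodule R V, L.FG → IsInvariant ρ L → M ≤ L → L ≤ dualLattice Q L → L = M)
    (hM : M ≤ dualLattice Q M) (hMfg : M.FG) (hspan : span K (M : Set V) = ⊤)
    (hMinv : IsInvariant ρ M) (hDfg : (dualLattice Q M).FG)
    (hDinv : IsInvariant ρ (dualLattice Q M)) :
    ∀ x ∈ dualLattice Q M, π • x ∈ M := by
  obtain ⟨t, ht⟩ := exists_pow_smul_le hπ hspan hDfg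
  have hdesc : ∀ k : ℕ, (∀ x ∈ dualLattice Q M, π ^ (k + 1) • x ∈ M) →
      ∀ x ∈ dualLattice Q M, π ^ 1 • x ∈ M := by
    intro k
    induction k with
    | zero => exact id
    | succ k ih =>
      exact fun h => ih <|
        pow_succ_smul_mem_of_pow_add_two_smul_mem hmax hM hMfg hMinv hDfg hDinv h
  simpa using hdesc t fun x hx => pow_smul_mem_of_le (ht x hx) t.le_succ

end Maximal

section ResidueForms

variable {R K V : Type*} [CommRing R] [Field K] [Algebra R K]
  [AddCommGroup V] [Module K V] [Module R V] [IsScalarTower R K V]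
  {Q : QuadraticForm K V} {π : R} {M : Submodule R V} {x y z : V}

theorem exists_mul_eq_apply_add_smul_sub (hy : y ∈ M) (hz : z ∈ dualLattice Q M)
    (hQz : algebraMap R K π * Q z ∈ (algebraMap R K).range) :
    ∃ r : R, algebraMap R K (π * r) = Q (y + π • z) - Q y := by
  obtain ⟨r, hr⟩ := hQz
  obtain ⟨s, hs⟩ := mem_dualLattice.mp hz y hy
  refine ⟨r + s, ?_⟩
  rw [QuadraticMap.map_add Q, QuadraticMap.map_smul_of_tower, polar_smul_right_of_tower, polar_comm,
    map_mul, map_add, hr, hs, Algebra.smul_def, Algebra.smul_def, map_mul]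
  ring

theorem exists_eq_smul_of_polar_mem (hπ : algebraMap R K π ≠ 0)
    (h : ∀ y ∈ M, ∃ r : R, algebraMap R K (π * r) = polar Q x y) :
    ∃ z ∈ dualLattice Q M, x = π • z := by
  refine ⟨(algebraMap R K π)⁻¹ • x, mem_dualLattice.mpr fun y hy => ?_, ?_⟩
  · obtain ⟨r, hr⟩ := h y hy
    refine ⟨r, ?_⟩
    rw [polar_smul_left, smul_eq_mul, ← hr, map_mul, inv_mul_cancel_left₀ hπ]
  · rw [← algebraMap_smul K π, smul_smul, mul_inv_cancel₀ hπ, one_smul]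

theorem exists_mul_eq_mul_sub_mul (heven : IsEven Q M) (hy : y ∈ dualLattice Q M)
    (hxy : x - y ∈ M) :
    ∃ r : R, algebraMap R K (π * r) = algebraMap R K π * Q x - algebraMap R K π * Q y := by
  obtain ⟨r, hr⟩ := heven _ hxy
  obtain ⟨s, hs⟩ := mem_dualLattice.mp hy _ hxy
  refine ⟨r + s, ?_⟩
  rw [← add_sub_cancel y x, QuadraticMap.map_add Q, map_mul, map_add, hr, hs]
  ring

end ResidueForms

end EvenLattice

open EvenLattice

/-- Let `R` be a DVR with uniformizer `π`, residue field `F = R/(π)` and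
fraction field `K`; let `ρ` be a representation of a finite group `G` on a
finite-dimensional `K`-space `V` with nondegenerate invariant quadratic form `Q`.  Assume
`2` is a unit in `R` or no invariant lattice has the trivial module as a composition factor
of its reduction.  If `M` is a maximal invariant even lattice with dual lattice `M^#`, then
`π·M^# ⊆ M ⊆ M^#`, `π·Q(M^#) ⊆ R`, and the induced `F`-valued forms `q₁` on `M/πM^#`
(given by `Q mod π`) and `q₂` on `M^#/M` (given by `π·Q mod π`) are well-defined,
nondegenerate and `G`-invariant. -/
theorem statement11 {R K G V : Type*}
    [CommRing R] [IsDomain R] [IsDiscreteValuationRing R]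
    [Field K] [Algebra R K] [IsFractionRing R K]
    [Group G] [Finite G]
    [AddCommGroup V] [Module K V] [Module R V] [IsScalarTower R K V]
    [FiniteDimensional K V]
    (π : R) (hπ : Irreducible π)
    (ρ : Representation K G V)
    (Q : QuadraticForm K V)
    (hnd : ∀ x : V, (∀ y : V, polar (⇑Q) x y = 0) → x = 0)
    (hinv : ∀ (g : G) (x : V), Q (ρ g x) = Q x)
    -- `2` is a unit in `R`, or for every invariant lattice `N` the trivial `F[G]`-module
    -- is not a composition factor of `N/πN`:
    (halt : IsUnit (2 : R) ∨
      ∀ N : Submodule R V, N.FG → Submodule.span K (N : Set V) = ⊤ →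
        (∀ g : G, ∀ x ∈ N, ρ g x ∈ N) →
        ¬ ∃ P₁ P₂ : Submodule R V, Ideal.span {π} • N ≤ P₁ ∧ P₁ < P₂ ∧ P₂ ≤ N ∧
          (∀ g : G, ∀ x ∈ P₁, ρ g x ∈ P₁) ∧ (∀ g : G, ∀ x ∈ P₂, ρ g x ∈ P₂) ∧
          (∀ g : G, ∀ x ∈ P₂, ρ g x - x ∈ P₁))
    (M : Submodule R V) (hfg : M.FG)
    (hspan : Submodule.span K (M : Set V) = ⊤)
    (hMinv : ∀ g : G, ∀ x ∈ M, ρ g x ∈ M)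
    -- `M` is even: `Q(M) ⊆ R`
    (heven : ∀ x ∈ M, ∃ r : R, algebraMap R K r = Q x)
    -- `M` is maximal among invariant even lattices:
    (hmax : ∀ M' : Submodule R V, M'.FG → Submodule.span K (M' : Set V) = ⊤ →
      (∀ g : G, ∀ x ∈ M', ρ g x ∈ M') → (∀ x ∈ M', ∃ r : R, algebraMap R K r = Q x) →
      M ≤ M' → M' = M) :
    -- `M ⊆ M^#`
    ((M : Set V) ⊆ dualLatticeSet Q M) ∧
    -- `π · M^# ⊆ M`
    (∀ x ∈ dualLatticeSet Q M, π • x ∈ M) ∧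
    -- `π · Q(M^#) ⊆ R`
    (∀ x ∈ dualLatticeSet Q M, ∃ r : R, algebraMap R K r = algebraMap R K π * Q x) ∧
    -- `M^#` is `ρ(G)`-invariant (so that `G` acts on `M/πM^#` and `M^#/M`)
    (∀ g : G, ∀ x ∈ dualLatticeSet Q M, ρ g x ∈ dualLatticeSet Q M) ∧
    -- `q₁` on `M/(π·M^#)`, `q₁(x̄) = Q(x) mod π`, is well-defined:
    (∀ x ∈ M, ∀ y ∈ M, (∃ z ∈ dualLatticeSet Q M, x - y = π • z) →
      ∃ r : R, algebraMap R K (π * r) = Q x - Q y) ∧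
    -- `q₁` is nondegenerate:
    (∀ x ∈ M, (∀ y ∈ M, ∃ r : R, algebraMap R K (π * r) = polar (⇑Q) x y) →
      ∃ z ∈ dualLatticeSet Q M, x = π • z) ∧
    -- `q₂` on `M^#/M`, `q₂(x̄) = π·Q(x) mod π`, is well-defined:
    (∀ x ∈ dualLatticeSet Q M, ∀ y ∈ dualLatticeSet Q M, x - y ∈ M →
      ∃ r : R, algebraMap R K (π * r) =
        algebraMap R K π * Q x - algebraMap R K π * Q y) ∧
    -- `q₂` is nondegenerate:
    (∀ x ∈ dualLatticeSet Q M,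
      (∀ y ∈ dualLatticeSet Q M,
        ∃ r : R, algebraMap R K (π * r) = algebraMap R K π * polar (⇑Q) x y) →
      x ∈ M) := by
  have hπK : algebraMap R K π ≠ 0 :=
    (map_ne_zero_iff _ (IsFractionRing.injective R K)).mpr hπ.ne_zero
  have hM : M ≤ dualLattice Q M := IsEven.le_dualLattice heven
  have hDinv : IsInvariant ρ (dualLattice Q M) := IsInvariant.dualLattice hinv hMinv
  have hDfg := dualLattice_fg hnd hspan
  have hmaxint : ∀ L : Submodule R V, L.FG → IsInvariant ρ L → M ≤ L →
      L ≤ dualLattice Q L → L = M := fun L hLfg hLinv hML hL =>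
    have hLspan := span_eq_top_of_le hspan hML
    hmax L hLfg hLspan hLinv (IsEven.of_le_dualLattice hπ halt hinv hLfg hLspan hLinv hL) hML
  have hπD := smul_mem_of_mem_dualLattice hπ hmaxint hM hfg hspan hMinv hDfg hDinv
  have hπQ : IsEven (algebraMap R K π • Q) (dualLattice Q M) :=
    .of_le_dualLattice hπ halt (fun g x => by simp [hinv]) hDfg (span_eq_top_of_le hspan hM)
      hDinv (le_dualLattice_algebraMap_smul hπD)
  rw [← coe_dualLattice]
  refine ⟨hM, hπD, hπQ, hDinv, ?_, fun x _ => exists_eq_smul_of_polar_mem hπK,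
    fun x _ y hy => exists_mul_eq_mul_sub_mul heven hy, fun x _ hall => ?_⟩
  · rintro x - y hy ⟨z, hz, hxy⟩
    rw [sub_eq_iff_eq_add'.mp hxy]
    exact exists_mul_eq_apply_add_smul_sub hy hz (hπQ z hz)
  · refine dualLattice_dualLattice_le hinv hmaxint hM hfg hMinv hDinv <|
      mem_dualLattice.mpr fun y hy => ?_
    obtain ⟨r, hr⟩ := hall y hy
    exact ⟨r, mul_left_cancel₀ hπK (by rw [← map_mul, hr])⟩
end

section
/- Let K be a number field with ring of integers O_K, and let S be a finite set of nonzero prime ideals of O_K. Then the set of square classes {δ·(K^×)² : δ ∈ K^×, and the ℘-adic valuation v_℘(δ) is even for every nonzero prime ideal ℘ of O_K not in S} is a finite subgroup of K^×/(K^×)². -/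
/-!
If `δ` has valuation divisible by `n` at every prime, then `(δ) = 𝔡ⁿ` for a fractional ideal `𝔡`,
and the class of `𝔡` in the class group determines `δ` up to units and `n`-th powers. As the class
group is finite and `(𝓞 K)ˣ / (𝓞 K)ˣⁿ` is finite by Dirichlet's unit theorem, `K⟮∅, n⟯` is finite.
The valuations at the finitely many primes of `S` embed `K⟮S, n⟯ / K⟮∅, n⟯` into `(ℤ/nℤ)^S`.
-/

open IsDedekindDomain IsDedekindDomain.HeightOneSpectrum FractionalIdeal nonZeroDivisors

theorem MonoidHom.finite_range_of_finite_map {G A : Type*} [Group G] [Group A] (f : G →* A)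
    (N : Subgroup G) [N.FiniteIndex] [Finite (N.map f)] : Finite f.range := by
  set M := N.map f.rangeRestrict
  have : M.FiniteIndex := ⟨ne_zero_of_dvd_ne_zero Subgroup.FiniteIndex.index_ne_zero
    (N.index_map_dvd f.rangeRestrict_surjective)⟩
  have : Finite M := by
    have h : M.map f.range.subtype = N.map f := by
      rw [Subgroup.map_map, f.subtype_comp_rangeRestrict]
    exact (M.equivMapOfInjective _ f.range.subtype_injective).finite_iff.mpr (h ▸ inferInstance)
  exact (Subgroup.finite_iff_finite_and_finiteIndex M).mpr ⟨inferInstance, inferInstance⟩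

section DedekindDomain

variable {R : Type*} [CommRing R] [IsDedekindDomain R] {K : Type*} [Field K]
  [Algebra R K] [IsFractionRing R K]

theorem FractionalIdeal.exists_pow_eq_of_dvd_count {I : FractionalIdeal R⁰ K} (hI : I ≠ 0)
    {n : ℕ} (h : ∀ v : HeightOneSpectrum R, (n : ℤ) ∣ count K v I) :
    ∃ J : FractionalIdeal R⁰ K, J ^ n = I := by
  set e : HeightOneSpectrum R → ℤ := fun v => count K v I / n
  have hsupp : Function.HasFiniteMulSupport fun v : HeightOneSpectrum R =>
      (v.asIdeal : FractionalIdeal R⁰ K) ^ e v := by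
    refine (finite_factors I).subset fun v hv hcount => hv ?_
    simp [e, show count K v I = 0 from hcount]
  refine ⟨∏ᶠ v, (v.asIdeal : FractionalIdeal R⁰ K) ^ e v, ?_⟩
  conv_rhs => rw [← finprod_heightOneSpectrum_factorization' K hI]
  rw [finprod_pow hsupp]
  refine finprod_congr fun v => ?_
  rw [← zpow_natCast, ← zpow_mul, mul_comm, Int.mul_ediv_cancel' (h v)]

theorem IsDedekindDomain.HeightOneSpectrum.valuationOfNeZeroMod_mk_eq_one_iff
    (v : HeightOneSpectrum R) (n : ℕ) (δ : Kˣ) :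
    v.valuationOfNeZeroMod n (QuotientGroup.mk δ : Kˣ ⧸ (powMonoidHom n : Kˣ →* Kˣ).range) = 1 ↔
      (n : ℤ) ∣ Multiplicative.toAdd (v.valuationOfNeZero δ) := by
  rw [valuationOfNeZeroMod]
  erw [MonoidHom.comp_apply, MulEquiv.coe_toMonoidHom, MulEquiv.map_eq_one_iff,
    QuotientGroup.map_mk, QuotientGroup.eq_one_iff]
  exact Int.mem_zmultiples_iff

theorem IsDedekindDomain.HeightOneSpectrum.count_spanSingleton (v : HeightOneSpectrum R)
    (δ : Kˣ) :
    count K v (spanSingleton R⁰ (δ : K)) = -Multiplicative.toAdd (v.valuationOfNeZero δ) := by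
  set s := IsLocalization.sec R⁰ (δ : K)
  have hs : algebraMap R K (s.2 : R) ≠ 0 :=
    IsFractionRing.to_map_ne_zero_of_mem_nonZeroDivisors s.2.2
  have hδ : spanSingleton R⁰ (δ : K) =
      spanSingleton R⁰ (algebraMap R K (s.2 : R))⁻¹ * ↑(Ideal.span {s.1} : Ideal R) := by
    rw [coeIdeal_span_singleton, spanSingleton_mul_spanSingleton,
      ← IsLocalization.sec_spec R⁰ (δ : K), mul_comm (δ : K), inv_mul_cancel_left₀ hs]
  rw [count_well_defined K v (spanSingleton_ne_zero_iff.mpr δ.ne_zero) hδ]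
  -- `valuationOfNeZero` is defined through the same representative `IsLocalization.sec`.
  change _ = -(_ - _)
  ring

namespace IsDedekindDomain

variable (R K) in
noncomputable def rootPairs (n : ℕ) : Subgroup (Kˣ × (FractionalIdeal R⁰ K)ˣ) :=
  ((powMonoidHom n).comp (MonoidHom.snd _ _)).eqLocus
    ((toPrincipalIdeal R K).comp (MonoidHom.fst _ _))

variable {n : ℕ}

theorem mem_rootPairs {p : Kˣ × (FractionalIdeal R⁰ K)ˣ} :
    p ∈ rootPairs R K n ↔ p.2 ^ n = toPrincipalIdeal R K p.1 :=
  Iff.rfl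

namespace rootPairs

variable (R K n)

noncomputable def fstClass : rootPairs R K n →* Kˣ ⧸ (powMonoidHom n : Kˣ →* Kˣ).range :=
  (QuotientGroup.mk' _).comp ((MonoidHom.fst _ _).comp (rootPairs R K n).subtype)

noncomputable def sndClass :
    rootPairs R K n →* (FractionalIdeal R⁰ K)ˣ ⧸ (toPrincipalIdeal R K).range :=
  (QuotientGroup.mk' _).comp ((MonoidHom.snd _ _).comp (rootPairs R K n).subtype)

theorem selmerGroup_empty_le_range_fstClass [NeZero n] :
    selmerGroup (R := R) (K := K) (S := ∅) (n := n) ≤ (fstClass R K n).range := by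
  intro x hx
  obtain ⟨δ, rfl⟩ := QuotientGroup.mk_surjective x
  have hδ : spanSingleton R⁰ (δ : K) ≠ 0 := spanSingleton_ne_zero_iff.mpr δ.ne_zero
  obtain ⟨J, hJ⟩ := exists_pow_eq_of_dvd_count hδ fun v => by
    rw [v.count_spanSingleton, dvd_neg]
    exact (v.valuationOfNeZeroMod_mk_eq_one_iff n δ).mp (hx v (Set.notMem_empty v))
  have hJ0 : J ≠ 0 := fun h => hδ (by rw [← hJ, h, zero_pow (NeZero.ne n)])
  have hroot : (δ, Units.mk0 J hJ0) ∈ rootPairs R K n := mem_rootPairs.mpr <|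
    Units.ext (by rw [Units.val_pow_eq_pow_val, Units.val_mk0, hJ, coe_toPrincipalIdeal])
  exact ⟨⟨_, hroot⟩, rfl⟩

theorem map_ker_sndClass_le_range_units :
    (sndClass R K n).ker.map (fstClass R K n) ≤
      ((QuotientGroup.mk' _).comp (Units.map (algebraMap R K : R →* K))).range := by
  rintro _ ⟨⟨⟨δ, D⟩, hroot⟩, hker, rfl⟩
  obtain ⟨c, rfl⟩ : D ∈ (toPrincipalIdeal R K).range := (QuotientGroup.eq_one_iff D).mp hker
  have h : spanSingleton R⁰ ((c ^ n : Kˣ) : K) = spanSingleton R⁰ (δ : K) := by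
    rw [← coe_toPrincipalIdeal, ← coe_toPrincipalIdeal, map_pow, mem_rootPairs.mp hroot]
  obtain ⟨z, hz⟩ := spanSingleton_eq_spanSingleton.mp h
  refine ⟨z, QuotientGroup.eq.mpr ⟨c, Units.ext ?_⟩⟩
  simp [← hz, Units.smul_def, Algebra.smul_def]

end rootPairs

end IsDedekindDomain

namespace IsDedekindDomain.selmerGroup

variable {S : Set (HeightOneSpectrum R)} {n : ℕ}

theorem finite_of_finite_empty [NeZero n]
    [Finite (selmerGroup (R := R) (K := K) (S := ∅) (n := n))] (hS : S.Finite) :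
    Finite (selmerGroup (R := R) (K := K) (S := S) (n := n)) := by
  have := hS.to_subtype
  rw [(valuation (R := R) (K := K) (S := S) (n := n)).finite_iff_finite_ker_range,
    valuation_ker_eq, (Subgroup.subgroupOfEquivOfLe (monotone (Set.empty_subset S))).finite_iff]
  exact ⟨inferInstance, inferInstance⟩

end IsDedekindDomain.selmerGroup

end DedekindDomain

open NumberField

theorem NumberField.finite_selmerGroup (K : Type*) [Field K] [NumberField K]
    {S : Set (HeightOneSpectrum (𝓞 K))} (hS : S.Finite) (n : ℕ) [NeZero n] :
    Finite (selmerGroup (R := 𝓞 K) (K := K) (S := S) (n := n)) := by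
  have : Finite ((FractionalIdeal (𝓞 K)⁰ K)ˣ ⧸ (toPrincipalIdeal (𝓞 K) K).range) :=
    .of_equiv _ (ClassGroup.equiv K).toEquiv
  have : Group.FG (𝓞 K)ˣ := Group.fg_iff_monoid_fg.mpr inferInstance
  have : Finite ((QuotientGroup.mk' (powMonoidHom n : Kˣ →* Kˣ).range).comp
      (Units.map (algebraMap (𝓞 K) K : 𝓞 K →* K))).range :=
    CommGroup.finite_of_fg_isMulTorsion _
      ((CommGroup.isMulTorsion_quotient_range_powMonoidHom Kˣ (NeZero.ne n)).subgroup _)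
  have : Finite ((rootPairs.sndClass (𝓞 K) K n).ker.map (rootPairs.fstClass (𝓞 K) K n)) :=
    .of_injective _
      (Subgroup.inclusion_injective (rootPairs.map_ker_sndClass_le_range_units (𝓞 K) K n))
  have := (rootPairs.fstClass (𝓞 K) K n).finite_range_of_finite_map
    (rootPairs.sndClass (𝓞 K) K n).ker
  have : Finite (selmerGroup (R := 𝓞 K) (K := K) (S := ∅) (n := n)) := .of_injective _
    (Subgroup.inclusion_injective (rootPairs.selmerGroup_empty_le_range_fstClass (𝓞 K) K n))
  exact selmerGroup.finite_of_finite_empty hS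

/-- Let `K` be a number field with ring of integers `O_K` and `S` a
finite set of nonzero prime ideals of `O_K`.  The square classes `δ·(K^×)²` with
`v_℘(δ)` even for all primes `℘ ∉ S` form a finite subgroup of `K^×/(K^×)²`. -/
theorem statement14 (K : Type*) [Field K] [NumberField K]
    (S : Set (HeightOneSpectrum (NumberField.RingOfIntegers K))) (hS : S.Finite) :
    ∃ H : Subgroup (Kˣ ⧸ (powMonoidHom 2 : Kˣ →* Kˣ).range),
      (H : Set (Kˣ ⧸ (powMonoidHom 2 : Kˣ →* Kˣ).range)) =
        {x | ∃ δ : Kˣ, QuotientGroup.mk δ = x ∧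
          ∀ v : HeightOneSpectrum (NumberField.RingOfIntegers K), v ∉ S →
            ∃ n : ℤ, (v.valuation K (δ : K) : WithZero (Multiplicative ℤ)) =
              ((Multiplicative.ofAdd (2 * n) : Multiplicative ℤ) :
                WithZero (Multiplicative ℤ))} ∧
      Set.Finite (H : Set (Kˣ ⧸ (powMonoidHom 2 : Kˣ →* Kˣ).range)) := by
  have hsq (v : HeightOneSpectrum (𝓞 K)) (δ : Kˣ) :
      v.valuationOfNeZeroMod 2 (QuotientGroup.mk δ : Kˣ ⧸ (powMonoidHom 2 : Kˣ →* Kˣ).range) = 1 ↔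
        ∃ n : ℤ, v.valuation K (δ : K) = ((Multiplicative.ofAdd (2 * n) : Multiplicative ℤ) :
          WithZero (Multiplicative ℤ)) := by
    rw [v.valuationOfNeZeroMod_mk_eq_one_iff, ← v.valuationOfNeZero_eq, Nat.cast_ofNat]
    exact exists_congr fun k => by rw [WithZero.coe_inj, Multiplicative.ext_iff, toAdd_ofAdd]
  have := finite_selmerGroup K hS 2
  refine ⟨selmerGroup (R := 𝓞 K) (K := K) (S := S) (n := 2), ?_, Set.toFinite _⟩
  ext x
  constructor
  · intro hx
    obtain ⟨δ, rfl⟩ := QuotientGroup.mk_surjective x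
    exact ⟨δ, rfl, fun v hv => (hsq v δ).mp (hx v hv)⟩
  · rintro ⟨δ, rfl, hδ⟩ v hv
    exact (hsq v δ).mpr (hδ v hv)
end
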